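/- arXiv:1606.04642 — 8 statements merged into one kernel-verified Lean document; each statement's English description precedes it below -/
import Mathlib

section
/- Let m : ℕ → ℕ with m 0 = 0 and let a : Fin n → ℕ (indexed 1..n) satisfy ∑ i, i * a i = n. Then the number of M-assemblies of size n with type a (i.e., a i components of size i, each component of size i decorated in one of m i ways) is N(n,a) = n! * ∏ i, m(i)^(a i) / (a i ! * (i!)^(a i)). In particular, for set partitions (m i = 1 for all i ≥ 1), the number of set partitions of [n] with a i blocks of size i equals n! / ∏ i (a i ! * (i!)^(a i)). -/
open Finset
open scoped Nat

/-!
Double count the pairs `(P, t)` of a partition `P` of type `a` of an `n`-set and a block `t ∈ P`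
of size `i`, where `a i ≠ 0`. Each `P` has `a i` such blocks; conversely there are `n.choose i`
choices of `t`, and removing `t` leaves a partition of the other `n - i` points of type
`a - eᵢ`. Hence `a i * N(n, a) = n.choose i * N(n - i, a - eᵢ)`, and induction on `n` gives
`N(n, a) * ∏ j, (a j)! * (j !) ^ a j = n !`. Decorating the blocks then multiplies the count by
`∏ j, m j ^ a j`.
-/

namespace Finset

lemma sum_mul_eq_add_sum_mul_update {S : Finset ℕ} {i : ℕ} (hi : i ∈ S) {a : ℕ → ℕ}
    (ha : a i ≠ 0) :
    ∑ j ∈ S, j * a j = i + ∑ j ∈ S, j * Function.update a i (a i - 1) j := by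
  have hrest :
      ∑ j ∈ S.erase i, j * Function.update a i (a i - 1) j = ∑ j ∈ S.erase i, j * a j :=
    sum_congr rfl fun j hj => by rw [Function.update_of_ne (ne_of_mem_erase hj)]
  rw [← add_sum_erase _ _ hi, ← add_sum_erase _ _ hi, Function.update_self, hrest]
  obtain ⟨k, hk⟩ := Nat.exists_eq_add_one_of_ne_zero ha
  rw [hk, Nat.add_sub_cancel, Nat.mul_succ]
  ring

lemma prod_factorial_mul_pow_eq_mul_prod_update {S : Finset ℕ} {i : ℕ} (hi : i ∈ S)
    {a : ℕ → ℕ} (ha : a i ≠ 0) :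
    ∏ j ∈ S, (a j)! * j ! ^ a j =
      a i * i ! *
        ∏ j ∈ S, (Function.update a i (a i - 1) j)! * j ! ^ Function.update a i (a i - 1) j := by
  have hrest : ∏ j ∈ S.erase i, (Function.update a i (a i - 1) j)! *
      j ! ^ Function.update a i (a i - 1) j = ∏ j ∈ S.erase i, (a j)! * j ! ^ a j :=
    prod_congr rfl fun j hj => by rw [Function.update_of_ne (ne_of_mem_erase hj)]
  rw [← mul_prod_erase _ _ hi, ← mul_prod_erase _ _ hi, Function.update_self, hrest]
  obtain ⟨k, hk⟩ := Nat.exists_eq_add_one_of_ne_zero ha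
  rw [hk, Nat.add_sub_cancel, Nat.factorial_succ, pow_succ]
  ring

end Finset

namespace Finpartition

variable {α : Type*} [DecidableEq α] {s t : Finset α}

lemma avoid_parts_of_mem (P : Finpartition s) (ht : t ∈ P.parts) :
    (P.avoid t).parts = P.parts.erase t := by
  ext c
  rw [mem_avoid, mem_erase]
  constructor
  · rintro ⟨d, hd, hdt, rfl⟩
    have hne : d ≠ t := by rintro rfl; exact hdt le_rfl
    have hdisj : Disjoint d t := P.disjoint hd ht hne
    rw [sdiff_eq_self_of_disjoint hdisj]
    exact ⟨hne, hd⟩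
  · rintro ⟨hne, hc⟩
    have hdisj : Disjoint c t := P.disjoint hc ht hne
    exact ⟨c, hc, fun hle => P.ne_bot hc (hdisj.eq_bot_of_le hle),
      sdiff_eq_self_of_disjoint hdisj⟩

lemma notMem_parts_of_sdiff (Q : Finpartition (s \ t)) (ht : t.Nonempty) : t ∉ Q.parts := by
  obtain ⟨x, hx⟩ := ht
  exact fun h => (mem_sdiff.1 (Q.le h hx)).2 hx

def removePartEquiv (ht : t.Nonempty) (hts : t ⊆ s) :
    {P : Finpartition s // t ∈ P.parts} ≃ Finpartition (s \ t) where
  toFun P := P.1.avoid t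
  invFun Q := ⟨Q.extend ht.ne_empty sdiff_disjoint (sdiff_union_of_subset hts),
    by rw [extend_parts]; exact mem_insert_self _ _⟩
  left_inv P := Subtype.ext <| Finpartition.ext <| by
    rw [extend_parts, avoid_parts_of_mem _ P.2, insert_erase P.2]
  right_inv Q := Finpartition.ext <| by
    rw [avoid_parts_of_mem _ (by rw [extend_parts]; exact mem_insert_self _ _), extend_parts,
      erase_insert (Q.notMem_parts_of_sdiff ht)]

def HasType (N : ℕ) (a : ℕ → ℕ) (P : Finpartition s) : Prop :=
  ∀ j ∈ Icc 1 N, #{b ∈ P.parts | #b = j} = a j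

instance (N : ℕ) (a : ℕ → ℕ) : DecidablePred (HasType (s := s) N a) :=
  fun _ => inferInstanceAs (Decidable (∀ j ∈ Icc 1 N, _))

lemma hasType_iff_of_parts_eq_insert {s' : Finset α} {P : Finpartition s} {Q : Finpartition s'}
    {N : ℕ} {a : ℕ → ℕ} (hPQ : P.parts = insert t Q.parts) (htQ : t ∉ Q.parts) (ha : a #t ≠ 0) :
    P.HasType N a ↔ Q.HasType N (Function.update a #t (a #t - 1)) := by
  refine forall₂_congr fun j _ => ?_
  rw [hPQ, filter_insert]
  by_cases hj : #t = j
  · subst hj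
    rw [if_pos rfl, card_insert_of_notMem (fun h => htQ (mem_filter.1 h).1), Function.update_self]
    omega
  · rw [if_neg hj, Function.update_of_ne (Ne.symm hj)]

lemma sum_card_filter_card_parts_eq (F : Finset (Finpartition s)) (i : ℕ) :
    ∑ P ∈ F, #{b ∈ P.parts | #b = i} = ∑ t ∈ powersetCard i s, #{P ∈ F | t ∈ P.parts} := by
  refine Eq.trans ?_
    (sum_card_bipartiteAbove_eq_sum_card_bipartiteBelow fun (P : Finpartition s) t => t ∈ P.parts)
  refine sum_congr rfl fun P _ => congrArg card ?_
  ext b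
  simp only [bipartiteAbove, mem_filter, mem_powersetCard]
  exact ⟨fun ⟨hb, hbi⟩ => ⟨⟨P.le hb, hbi⟩, hb⟩, fun ⟨⟨_, hbi⟩, hb⟩ => ⟨hb, hbi⟩⟩

lemma card_mem_parts_hasType (ht : t.Nonempty) (hts : t ⊆ s) {N : ℕ} {a : ℕ → ℕ}
    (ha : a #t ≠ 0) :
    Nat.card {P : Finpartition s // t ∈ P.parts ∧ P.HasType N a} =
      Nat.card {Q : Finpartition (s \ t) // Q.HasType N (Function.update a #t (a #t - 1))} :=
  Nat.card_congr <| (Equiv.subtypeSubtypeEquivSubtypeInter _ _).symm.trans <|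
    (removePartEquiv ht hts).subtypeEquiv fun P => hasType_iff_of_parts_eq_insert
      (by rw [removePartEquiv, Equiv.coe_fn_mk, avoid_parts_of_mem _ P.2, insert_erase P.2])
      (notMem_parts_of_sdiff _ ht) ha

lemma mul_card_hasType_eq_sum [Fintype α] {N i : ℕ} {a : ℕ → ℕ} (hi : i ∈ Icc 1 N)
    (ha : a i ≠ 0) :
    a i * Nat.card {P : Finpartition s // P.HasType N a} =
      ∑ t ∈ powersetCard i s,
        Nat.card {Q : Finpartition (s \ t) // Q.HasType N (Function.update a i (a i - 1))} := by
  calc a i * Nat.card {P : Finpartition s // P.HasType N a}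
      = ∑ P ∈ ({P | P.HasType N a} : Finset (Finpartition s)), #{b ∈ P.parts | #b = i} := by
        rw [sum_congr rfl fun P (hP : P ∈ ({P | P.HasType N a} : Finset (Finpartition s))) =>
          (mem_filter.1 hP).2 i hi, sum_const, smul_eq_mul, mul_comm,
          Nat.card_eq_fintype_card, Fintype.card_subtype]
    _ = ∑ t ∈ powersetCard i s,
          #{P ∈ ({P | P.HasType N a} : Finset (Finpartition s)) | t ∈ P.parts} :=
        sum_card_filter_card_parts_eq _ i
    _ = _ := sum_congr rfl fun t ht => by
        obtain ⟨hts, rfl⟩ := mem_powersetCard.1 ht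
        rw [← card_mem_parts_hasType (card_pos.1 (mem_Icc.1 hi).1) hts ha, filter_filter,
          Nat.card_eq_fintype_card, Fintype.card_subtype]
        simp only [and_comm]

lemma card_hasType_mul_prod [Fintype α] (N : ℕ) (a : ℕ → ℕ) (s : Finset α)
    (ha : ∑ j ∈ Icc 1 N, j * a j = #s) :
    Nat.card {P : Finpartition s // P.HasType N a} * ∏ j ∈ Icc 1 N, (a j)! * j ! ^ a j =
      (#s)! := by
  induction hn : #s using Nat.strong_induction_on generalizing s a with
  | _ n IH =>
  subst hn
  by_cases hzero : ∀ j ∈ Icc 1 N, a j = 0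
  · have hs : s = ∅ :=
      card_eq_zero.1 (by rw [← ha]; exact sum_eq_zero fun j hj => by simp [hzero j hj])
    subst hs
    have hall (P : Finpartition (∅ : Finset α)) : P.HasType N a := fun j hj => by
      simp [parts_eq_empty_iff.2 rfl, hzero j hj]
    have : Unique (Finpartition (∅ : Finset α)) := inferInstanceAs (Unique (Finpartition ⊥))
    rw [Nat.card_congr (Equiv.subtypeUnivEquiv hall), Nat.card_unique,
      prod_eq_one fun j hj => by simp [hzero j hj], card_empty, Nat.factorial_zero, mul_one]
  push Not at hzero
  obtain ⟨i, hi, hai⟩ := hzero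
  have hsum := sum_mul_eq_add_sum_mul_update hi hai
  have hW := prod_factorial_mul_pow_eq_mul_prod_update hi hai
  set a' := Function.update a i (a i - 1)
  have hik : i ≤ #s := by rw [← ha, hsum]; exact Nat.le_add_right _ _
  have hIH : ∀ t ∈ powersetCard i s,
      Nat.card {Q : Finpartition (s \ t) // Q.HasType N a'} *
        ∏ j ∈ Icc 1 N, (a' j)! * j ! ^ a' j = (#s - i)! := fun t ht => by
    obtain ⟨hts, rfl⟩ := mem_powersetCard.1 ht
    have hcard : #(s \ t) = #s - #t := card_sdiff_of_subset hts
    have hpos := (mem_Icc.1 hi).1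
    rw [← hcard]
    exact IH _ (by omega) _ _ (by omega) rfl
  refine Nat.eq_of_mul_eq_mul_left (Nat.pos_of_ne_zero hai) ?_
  calc a i *
        (Nat.card {P : Finpartition s // P.HasType N a} * ∏ j ∈ Icc 1 N, (a j)! * j ! ^ a j)
      = (∑ t ∈ powersetCard i s, Nat.card {Q : Finpartition (s \ t) // Q.HasType N a'}) *
          (∏ j ∈ Icc 1 N, (a' j)! * j ! ^ a' j) * (a i * i !) := by
        rw [← mul_card_hasType_eq_sum hi hai, hW]
        ring
    _ = (#s).choose i * (#s - i)! * (a i * i !) := by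
        rw [sum_mul, sum_congr rfl hIH, sum_const, card_powersetCard, smul_eq_mul]
    _ = a i * (#s)! := by
        rw [← Nat.choose_mul_factorial_mul_factorial hik]
        ring

lemma prod_parts_eq_prod_pow_of_hasType {M : Type*} [CommMonoid M] {N : ℕ} {a : ℕ → ℕ}
    {P : Finpartition s} (hP : P.HasType N a) (hN : #s ≤ N) (f : ℕ → M) :
    ∏ b ∈ P.parts, f #b = ∏ j ∈ Icc 1 N, f j ^ a j := by
  rw [← prod_fiberwise_of_maps_to (g := card) (t := Icc 1 N) fun b hb =>
    mem_Icc.2 ⟨card_pos.2 (P.nonempty_of_mem_parts hb), (card_le_card (P.le hb)).trans hN⟩]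
  refine prod_congr rfl fun j hj => ?_
  rw [prod_congr rfl fun b hb => by rw [(mem_filter.1 hb).2], prod_const, hP j hj]

end Finpartition

theorem stmt_0_general (n : ℕ) (m : ℕ → ℕ) (a : ℕ → ℕ)
    (ha : ∑ i ∈ Finset.Icc 1 n, i * a i = n) :
    (Nat.card ((P : {P : Finpartition (Finset.univ : Finset (Fin n)) //
          ∀ i ∈ Finset.Icc 1 n, (P.parts.filter (fun b => b.card = i)).card = a i}) ×
        ((b : {s // s ∈ P.1.parts}) → Fin (m b.1.card))) : ℚ) =
      (n ! : ℚ) * ∏ i ∈ Finset.Icc 1 n,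
        (m i : ℚ) ^ a i / (((a i)! : ℚ) * ((i ! : ℚ)) ^ a i) ∧
    ((∀ i, 1 ≤ i → m i = 1) →
      (Nat.card {P : Finpartition (Finset.univ : Finset (Fin n)) //
          ∀ i ∈ Finset.Icc 1 n, (P.parts.filter (fun b => b.card = i)).card = a i} : ℚ) =
        (n ! : ℚ) / ∏ i ∈ Finset.Icc 1 n, (((a i)! : ℚ) * ((i ! : ℚ)) ^ a i)) := by
  have hcount : (Nat.card {P : Finpartition (univ : Finset (Fin n)) // P.HasType n a} : ℚ) =
      n ! / ∏ i ∈ Icc 1 n, ((a i)! * (i ! : ℚ) ^ a i) := by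
    have h := Finpartition.card_hasType_mul_prod n a (univ : Finset (Fin n)) (by simpa using ha)
    rw [card_univ, Fintype.card_fin] at h
    rw [eq_div_iff (by positivity)]
    exact_mod_cast h
  show (Nat.card ((P : {P : Finpartition (univ : Finset (Fin n)) // P.HasType n a}) ×
    ((b : {s // s ∈ P.1.parts}) → Fin (m b.1.card))) : ℚ) = _ ∧ _
  refine ⟨?_, fun _ => hcount⟩
  have hdecor (P : {P : Finpartition (univ : Finset (Fin n)) // P.HasType n a}) :
      Nat.card ((b : {s // s ∈ P.1.parts}) → Fin (m b.1.card)) = ∏ i ∈ Icc 1 n, m i ^ a i := by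
    rw [Nat.card_pi, prod_coe_sort P.1.parts fun b => Nat.card (Fin (m #b))]
    simpa using Finpartition.prod_parts_eq_prod_pow_of_hasType P.2 (by simp) m
  rw [Nat.card_sigma, sum_congr rfl fun P _ => hdecor P, sum_const, card_univ,
    ← Nat.card_eq_fintype_card, smul_eq_mul, Nat.cast_mul, hcount, prod_div_distrib]
  push_cast
  ring

/-- The number of M-assemblies of size n with type `a`
(an assembly = a set partition of [n] together with a decoration of each block
of size i by one of `m i` choices) equals n! ∏ m(i)^(a i)/(a i! (i!)^(a i)),
and in particular for set partitions (m i = 1 for i ≥ 1) the number of set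
partitions of [n] with `a i` blocks of size i equals n!/∏ (a i! (i!)^(a i)). -/
theorem stmt_0 (n : ℕ) (m : ℕ → ℕ) (hm0 : m 0 = 0) (a : ℕ → ℕ)
    (ha : ∑ i ∈ Finset.Icc 1 n, i * a i = n) :
    (Nat.card ((P : {P : Finpartition (Finset.univ : Finset (Fin n)) //
          ∀ i ∈ Finset.Icc 1 n, (P.parts.filter (fun b => b.card = i)).card = a i}) ×
        ((b : {s // s ∈ P.1.parts}) → Fin (m b.1.card))) : ℚ) =
      (n ! : ℚ) * ∏ i ∈ Finset.Icc 1 n,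
        (m i : ℚ) ^ a i / (((a i)! : ℚ) * ((i ! : ℚ)) ^ a i) ∧
    ((∀ i, 1 ≤ i → m i = 1) →
      (Nat.card {P : Finpartition (Finset.univ : Finset (Fin n)) //
          ∀ i ∈ Finset.Icc 1 n, (P.parts.filter (fun b => b.card = i)).card = a i} : ℚ) =
        (n ! : ℚ) / ∏ i ∈ Finset.Icc 1 n, (((a i)! : ℚ) * ((i ! : ℚ)) ^ a i)) :=
  stmt_0_general n m a ha
end

section
/- Let n, r be integers with 0 < r < n/2, let m_1, m_2, m_3 > 0, and let y = (2 m_1 m_3 / (3 m_2²)) · r² / (n - 2r). For any r with 0 < r < n/2 and any 0 ≤ j ≤ r/2, setting a_j = (n-2r+j, r-2j, j, 0, ..., 0), we have N(a_j, n)/N(a_0, n) ≤ y^j / j!, where N(a, n) = n! ∏_i m_i^{a_i}/(a_i! (i!)^{a_i}). Consequently, ∑_{1 ≤ j ≤ r/2} N(a_j, n)/N(a_0, n) ≤ e^y - 1. -/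
open Finset
open scoped Nat

/-- N(a_j, n) for the type a_j = (n-2r+j, r-2j, j, 0, ..., 0):
N = n! m1^{n-2r+j} m2^{r-2j} m3^j / ((n-2r+j)! (r-2j)! j! · 2^{r-2j} · 6^j). -/
noncomputable def Naj (m1 m2 m3 : ℝ) (n r j : ℕ) : ℝ :=
  (n ! : ℝ) * m1 ^ (n - 2 * r + j) * m2 ^ (r - 2 * j) * m3 ^ j /
    (((n - 2 * r + j)! : ℝ) * ((r - 2 * j)! : ℝ) * (j ! : ℝ) *
      2 ^ (r - 2 * j) * 6 ^ j)

/-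
Moving from a_0 to a_j trades 2j parts of size 2 for j parts of size 1 and j parts of size 3,
so the ratio N(a_j, n)/N(a_0, n) is (2 m1 m3/(3 m2²))^j/j! times the factorial ratio
r!/(r-2j)! · s!/(s+j)!, where s = n - 2r. The first factor is at most r^{2j}, the second at most
s^{-j}, giving y^j/j!; summing over j ≥ 1 bounds the sum by the tail of the exponential series.
-/

theorem Real.sum_Icc_one_pow_div_factorial_le_exp_sub_one {x : ℝ} (hx : 0 ≤ x) (k : ℕ) :
    ∑ j ∈ Icc 1 k, x ^ j / (j ! : ℝ) ≤ Real.exp x - 1 := by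
  have hsplit : ∑ i ∈ range (k + 1), x ^ i / (i ! : ℝ) = 1 + ∑ j ∈ Icc 1 k, x ^ j / (j ! : ℝ) := by
    rw [range_eq_Ico, sum_eq_sum_Ico_succ_bot (Nat.succ_pos k)]
    simp [Ico_add_one_right_eq_Icc]
  linarith [Real.sum_le_exp_of_nonneg hx (k + 1)]

theorem descFactorial_mul_factorial_div_factorial_add_le (a k : ℕ) {s : ℕ} (hs : 0 < s) (j : ℕ) :
    (a.descFactorial k : ℝ) * s ! / (s + j)! ≤ (a : ℝ) ^ k / (s : ℝ) ^ j := by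
  rw [div_le_div_iff₀ (by positivity) (by positivity)]
  have hdesc : (a.descFactorial k : ℝ) ≤ (a : ℝ) ^ k := by
    exact_mod_cast Nat.descFactorial_le_pow a k
  have hfact : (s ! : ℝ) * (s : ℝ) ^ j ≤ ((s + j)! : ℝ) := by
    exact_mod_cast by simpa using Nat.factorial_mul_pow_sub_le_factorial (Nat.le_add_right s j)
  calc (a.descFactorial k : ℝ) * s ! * (s : ℝ) ^ j
      = (a.descFactorial k : ℝ) * (s ! * (s : ℝ) ^ j) := by ring
    _ ≤ (a : ℝ) ^ k * ((s + j)! : ℝ) := by gcongr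

theorem Naj_div_Naj_zero {m1 m2 : ℝ} (m3 : ℝ) (hm1 : m1 ≠ 0) (hm2 : m2 ≠ 0) {n r j : ℕ}
    (hj : 2 * j ≤ r) (hrn : 2 * r ≤ n) :
    Naj m1 m2 m3 n r j / Naj m1 m2 m3 n r 0 =
      (2 * m1 * m3 / (3 * m2 ^ 2)) ^ j / (j ! : ℝ) *
        ((r.descFactorial (2 * j) : ℝ) * (n - 2 * r)! / (n - 2 * r + j)!) := by
  obtain ⟨b, rfl⟩ : ∃ b, r = b + 2 * j := ⟨r - 2 * j, by omega⟩
  obtain ⟨s, rfl⟩ : ∃ s, n = s + 2 * (b + 2 * j) := ⟨n - 2 * (b + 2 * j), by omega⟩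
  have hfact : ((b + 2 * j)! : ℝ) = b ! * (b + 2 * j).descFactorial (2 * j) := by
    exact_mod_cast (Nat.add_sub_cancel b (2 * j) ▸
      Nat.factorial_mul_descFactorial (Nat.le_add_left (2 * j) b)).symm
  have h6 : (6 : ℝ) ^ j = 2 ^ j * 3 ^ j := by rw [← mul_pow]; norm_num
  simp only [Naj, Nat.add_sub_cancel, Nat.sub_zero, Nat.mul_zero, Nat.add_zero, pow_zero,
    Nat.factorial_zero, Nat.cast_one, mul_one, hfact, h6, pow_add, mul_pow, div_pow]
  field_simp
  ring

theorem Naj_div_Naj_zero_le {m1 m2 m3 : ℝ} (h1 : 0 < m1) (h2 : 0 < m2) (h3 : 0 < m3)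
    {n r j : ℕ} (hj : 2 * j ≤ r) (hrn : 2 * r < n) :
    Naj m1 m2 m3 n r j / Naj m1 m2 m3 n r 0 ≤
      (2 * m1 * m3 / (3 * m2 ^ 2) * (r : ℝ) ^ 2 / ((n : ℝ) - 2 * r)) ^ j / (j ! : ℝ) := by
  have hs : ((n - 2 * r : ℕ) : ℝ) = (n : ℝ) - 2 * r := by push_cast [hrn.le]; ring
  rw [Naj_div_Naj_zero m3 h1.ne' h2.ne' hj hrn.le, ← hs]
  calc (2 * m1 * m3 / (3 * m2 ^ 2)) ^ j / (j ! : ℝ) *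
        ((r.descFactorial (2 * j) : ℝ) * (n - 2 * r)! / (n - 2 * r + j)!)
      ≤ (2 * m1 * m3 / (3 * m2 ^ 2)) ^ j / (j ! : ℝ) *
          ((r : ℝ) ^ (2 * j) / ((n - 2 * r : ℕ) : ℝ) ^ j) :=
        mul_le_mul_of_nonneg_left
          (descFactorial_mul_factorial_div_factorial_add_le r _ (by omega) j) (by positivity)
    _ = _ := by rw [pow_mul]; ring

theorem stmt_7_general (m1 m2 m3 : ℝ) (h1 : 0 < m1) (h2 : 0 < m2) (h3 : 0 < m3)
    (n r : ℕ) (hrn : 2 * r < n) :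
    (∀ j : ℕ, 2 * j ≤ r →
      Naj m1 m2 m3 n r j / Naj m1 m2 m3 n r 0 ≤
        (2 * m1 * m3 / (3 * m2 ^ 2) * (r : ℝ) ^ 2 / ((n : ℝ) - 2 * r)) ^ j / (j ! : ℝ)) ∧
    ∑ j ∈ Finset.Icc 1 (r / 2), Naj m1 m2 m3 n r j / Naj m1 m2 m3 n r 0 ≤
      Real.exp (2 * m1 * m3 / (3 * m2 ^ 2) * (r : ℝ) ^ 2 / ((n : ℝ) - 2 * r)) - 1 := by
  have hratio := fun j (hj : 2 * j ≤ r) => Naj_div_Naj_zero_le h1 h2 h3 hj hrn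
  have hs : (0 : ℝ) < (n : ℝ) - 2 * r := sub_pos.2 (by exact_mod_cast hrn)
  refine ⟨hratio, ?_⟩
  calc ∑ j ∈ Icc 1 (r / 2), Naj m1 m2 m3 n r j / Naj m1 m2 m3 n r 0
      ≤ ∑ j ∈ Icc 1 (r / 2),
          (2 * m1 * m3 / (3 * m2 ^ 2) * (r : ℝ) ^ 2 / ((n : ℝ) - 2 * r)) ^ j / (j ! : ℝ) :=
        sum_le_sum fun j hj => hratio j (by rw [mem_Icc] at hj; omega)
    _ ≤ _ := Real.sum_Icc_one_pow_div_factorial_le_exp_sub_one (by positivity) _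

/-- with 0 < r < n/2 and y = (2 m1 m3/(3 m2²)) r²/(n-2r),
for all 0 ≤ j ≤ r/2 we have N(a_j,n)/N(a_0,n) ≤ y^j/j!, and consequently
∑_{1 ≤ j ≤ r/2} N(a_j,n)/N(a_0,n) ≤ e^y - 1. -/
theorem stmt_7 (m1 m2 m3 : ℝ) (h1 : 0 < m1) (h2 : 0 < m2) (h3 : 0 < m3)
    (n r : ℕ) (hr : 0 < r) (hrn : 2 * r < n) :
    (∀ j : ℕ, 2 * j ≤ r →
      Naj m1 m2 m3 n r j / Naj m1 m2 m3 n r 0 ≤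
        (2 * m1 * m3 / (3 * m2 ^ 2) * (r : ℝ) ^ 2 / ((n : ℝ) - 2 * r)) ^ j / (j ! : ℝ)) ∧
    ∑ j ∈ Finset.Icc 1 (r / 2), Naj m1 m2 m3 n r j / Naj m1 m2 m3 n r 0 ≤
      Real.exp (2 * m1 * m3 / (3 * m2 ^ 2) * (r : ℝ) ^ 2 / ((n : ℝ) - 2 * r)) - 1 :=
  stmt_7_general m1 m2 m3 h1 h2 h3 n r hrn
end

section
/- Picking uniformly at random from the M-assemblies of size n of rank r (i.e., with exactly n - r components), where m_1, m_2, m_3 > 0 and 0 < r < n/2, the probability that the largest component has size exactly 3 satisfies P(L_1 = 3) ≤ e^y - 1, where y = (2 m_1 m_3 / (3 m_2²)) r² / (n - 2r). -/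
open Finset
open scoped Nat

/-- p(n,k): the number of M-assemblies of size n with exactly k components. -/
noncomputable def assemblyCount (m : ℕ → ℝ) (n k : ℕ) : ℝ :=
  ∑ a ∈ Finset.univ.filter (fun a : Fin (n + 1) → Fin (n + 1) =>
      (∑ i : Fin (n + 1), i.1 * (a i).1) = n ∧ (∑ i : Fin (n + 1), (a i).1) = k ∧
        (a 0).1 = 0),
    (n ! : ℝ) * ∏ i : Fin (n + 1),
      m i.1 ^ (a i).1 / (((a i).1 ! : ℝ) * ((i.1 ! : ℝ)) ^ (a i).1)

/-- The number of M-assemblies of size n with exactly k components whose largest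
component has size exactly 3 (types with no part of size ≥ 4 and at least one
part of size 3). -/
noncomputable def assemblyCountL1eq3 (m : ℕ → ℝ) (n k : ℕ) : ℝ :=
  ∑ a ∈ Finset.univ.filter (fun a : Fin (n + 1) → Fin (n + 1) =>
      (∑ i : Fin (n + 1), i.1 * (a i).1) = n ∧ (∑ i : Fin (n + 1), (a i).1) = k ∧
        (a 0).1 = 0 ∧ (∀ i : Fin (n + 1), 4 ≤ i.1 → (a i).1 = 0) ∧
        (∃ i : Fin (n + 1), i.1 = 3 ∧ (a i).1 ≠ 0)),
    (n ! : ℝ) * ∏ i : Fin (n + 1),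
      m i.1 ^ (a i).1 / (((a i).1 ! : ℝ) * ((i.1 ! : ℝ)) ^ (a i).1)

/-!
An assembly of size `n` and rank `r` with largest component `3` has count vector
`(n - 2r + j, r - 2j, j)` for some `1 ≤ j ≤ r / 2`; call its weight `W j`. Passing from `j` to
`j + 1` multiplies the weight by
`2 m₁ m₃ (r - 2j)(r - 2j - 1) / (3 m₂² (n - 2r + j + 1)(j + 1)) ≤ y / (j + 1)`,
so `W j ≤ W 0 · y ^ j / j!` and the count is at most `W 0 · (e ^ y - 1)`. Finally `W 0`, the
weight of the type `(n - 2r, r)`, is one of the terms of `p(n, n - r)`.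
-/

@[to_additive]
lemma Fin.prod_eq_mul_mul_of_eq_one {M : Type*} [CommMonoid M] {n : ℕ} (hn : 3 ≤ n)
    {f : Fin (n + 1) → M} (h : ∀ i : Fin (n + 1), i.1 ≠ 1 → i.1 ≠ 2 → i.1 ≠ 3 → f i = 1) :
    ∏ i, f i = f ⟨1, by omega⟩ * f ⟨2, by omega⟩ * f ⟨3, by omega⟩ := by
  classical
  rw [← prod_subset (subset_univ {⟨1, by omega⟩, ⟨2, by omega⟩, ⟨3, by omega⟩})
    fun i _ hi => by simp [Fin.ext_iff] at hi; exact h i hi.1 hi.2.1 hi.2.2,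
    prod_insert (by simp [Fin.ext_iff]), prod_pair (by simp [Fin.ext_iff]), mul_assoc]

lemma Real.sum_Icc_pow_div_factorial_le_exp_sub_one {x : ℝ} (hx : 0 ≤ x) (N : ℕ) :
    ∑ j ∈ Icc 1 N, x ^ j / j ! ≤ exp x - 1 := by
  have := Real.sum_le_exp_of_nonneg hx (N + 1)
  rw [range_eq_Ico, sum_eq_sum_Ico_succ_bot (Nat.succ_pos N), zero_add, Nat.succ_eq_add_one,
    Ico_add_one_right_eq_Icc] at this
  norm_num at this
  linarith

namespace Assembly

noncomputable def typeWeight (m : ℕ → ℝ) (n : ℕ) (a : Fin (n + 1) → Fin (n + 1)) : ℝ :=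
  (n ! : ℝ) * ∏ i : Fin (n + 1), m i.1 ^ (a i).1 / (((a i).1 ! : ℝ) * ((i.1 ! : ℝ)) ^ (a i).1)

/-- The count vectors `(n - 2r + j, r - 2j, j, 0, …)` are exactly the types of rank `r` with
no component larger than `3`. -/
def threeCounts (n r j i : ℕ) : ℕ :=
  if i = 1 then n - 2 * r + j else if i = 2 then r - 2 * j else if i = 3 then j else 0

def threeType (n r j : ℕ) : Fin (n + 1) → Fin (n + 1) :=
  fun i => Fin.ofNat (n + 1) (threeCounts n r j i.1)

noncomputable def threeTypeWeight (m : ℕ → ℝ) (n r j : ℕ) : ℝ :=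
  (n ! : ℝ) * (m 1 ^ (n - 2 * r + j) / ((n - 2 * r + j)! : ℝ)) *
    (m 2 ^ (r - 2 * j) / (((r - 2 * j)! : ℝ) * 2 ^ (r - 2 * j))) *
    (m 3 ^ j / ((j ! : ℝ) * 6 ^ j))

section threeType

variable {n r j : ℕ}

lemma threeType_val (hrn : 2 * r < n) (hj : 2 * j ≤ r) (i : Fin (n + 1)) :
    (threeType n r j i).1 = threeCounts n r j i.1 := by
  refine Nat.mod_eq_of_lt ?_
  unfold threeCounts
  split_ifs <;> omega

lemma threeType_val_eq_zero (hrn : 2 * r < n) (hj : 2 * j ≤ r) (i : Fin (n + 1))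
    (h1 : i.1 ≠ 1) (h2 : i.1 ≠ 2) (h3 : i.1 ≠ 3) : (threeType n r j i).1 = 0 := by
  simp [threeType_val hrn hj, threeCounts, h1, h2, h3]

lemma sum_mul_threeType (hr : 0 < r) (hrn : 2 * r < n) (hj : 2 * j ≤ r) :
    ∑ i : Fin (n + 1), i.1 * (threeType n r j i).1 = n := by
  rw [Fin.sum_eq_add_add_of_eq_zero (by omega) fun i h1 h2 h3 => by
    rw [threeType_val_eq_zero hrn hj i h1 h2 h3, mul_zero]]
  simp only [threeType_val hrn hj, threeCounts]
  norm_num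
  omega

lemma sum_threeType (hr : 0 < r) (hrn : 2 * r < n) (hj : 2 * j ≤ r) :
    ∑ i : Fin (n + 1), (threeType n r j i).1 = n - r := by
  rw [Fin.sum_eq_add_add_of_eq_zero (by omega) (threeType_val_eq_zero hrn hj)]
  simp only [threeType_val hrn hj, threeCounts]
  norm_num
  omega

lemma typeWeight_threeType (m : ℕ → ℝ) (hr : 0 < r) (hrn : 2 * r < n) (hj : 2 * j ≤ r) :
    typeWeight m n (threeType n r j) = threeTypeWeight m n r j := by
  rw [typeWeight, Fin.prod_eq_mul_mul_of_eq_one (by omega) fun i h1 h2 h3 => by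
    simp [threeType_val_eq_zero hrn hj i h1 h2 h3]]
  simp only [threeType_val hrn hj, threeCounts]
  norm_num [threeTypeWeight, Nat.factorial]
  ring

lemma eq_threeType (hrn : 2 * r < n) {a : Fin (n + 1) → Fin (n + 1)}
    (hsize : ∑ i : Fin (n + 1), i.1 * (a i).1 = n) (hcomp : ∑ i : Fin (n + 1), (a i).1 = n - r)
    (h0 : (a 0).1 = 0) (hlarge : ∀ i : Fin (n + 1), 4 ≤ i.1 → (a i).1 = 0) (hn : 3 ≤ n) :
    2 * (a ⟨3, by omega⟩).1 ≤ r ∧ a = threeType n r (a ⟨3, by omega⟩).1 := by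
  have hsupp : ∀ i : Fin (n + 1), i.1 ≠ 1 → i.1 ≠ 2 → i.1 ≠ 3 → (a i).1 = 0 := fun i h1 h2 h3 =>
    if h4 : 4 ≤ i.1 then hlarge i h4
    else by rwa [show i = 0 from Fin.ext (by rw [Fin.val_zero]; omega)]
  rw [Fin.sum_eq_add_add_of_eq_zero hn fun i h1 h2 h3 => by rw [hsupp i h1 h2 h3, mul_zero]]
    at hsize
  rw [Fin.sum_eq_add_add_of_eq_zero hn hsupp] at hcomp
  dsimp only at hsize hcomp
  have hj : 2 * (a ⟨3, by omega⟩).1 ≤ r := by omega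
  refine ⟨hj, funext fun i => Fin.ext ?_⟩
  rw [threeType_val hrn hj, threeCounts]
  split_ifs with h1 h2 h3
  · rw [show i = ⟨1, by omega⟩ from Fin.ext h1]; omega
  · rw [show i = ⟨2, by omega⟩ from Fin.ext h2]; omega
  · rw [show i = ⟨3, by omega⟩ from Fin.ext h3]
  · exact hsupp i h1 h2 h3

end threeType

lemma assemblyCountL1eq3_eq_sum (m : ℕ → ℝ) {n r : ℕ} (hr : 0 < r) (hrn : 2 * r < n) :
    assemblyCountL1eq3 m n (n - r) = ∑ j ∈ Icc 1 (r / 2), threeTypeWeight m n r j := by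
  unfold assemblyCountL1eq3
  refine sum_nbij' (fun a => (a ⟨3, by omega⟩).1) (threeType n r) ?_ ?_ ?_ ?_ ?_
  · simp only [mem_filter, mem_univ, true_and, mem_Icc]
    rintro a ⟨hsize, hcomp, h0, hlarge, i, hi, hai⟩
    have := (eq_threeType hrn hsize hcomp h0 hlarge (by omega)).1
    rw [show i = ⟨3, by omega⟩ from Fin.ext hi] at hai
    omega
  · intro j hj
    simp only [mem_Icc] at hj
    have hj2 : 2 * j ≤ r := by omega
    simp only [mem_filter, mem_univ, true_and]
    refine ⟨sum_mul_threeType hr hrn hj2, sum_threeType hr hrn hj2,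
      threeType_val_eq_zero hrn hj2 0 (by simp) (by simp) (by simp),
      fun i hi => threeType_val_eq_zero hrn hj2 i (by omega) (by omega) (by omega),
      ⟨3, by omega⟩, rfl, ?_⟩
    simp [threeType_val hrn hj2, threeCounts]
    omega
  · simp only [mem_filter, mem_univ, true_and]
    rintro a ⟨hsize, hcomp, h0, hlarge, i, hi, -⟩
    exact (eq_threeType hrn hsize hcomp h0 hlarge (by omega)).2.symm
  · intro j hj
    simp only [mem_Icc] at hj
    simp [threeType_val hrn (by omega : 2 * j ≤ r), threeCounts]
  · simp only [mem_filter, mem_univ, true_and]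
    rintro a ⟨hsize, hcomp, h0, hlarge, i, hi, -⟩
    obtain ⟨hj, ha⟩ := eq_threeType hrn hsize hcomp h0 hlarge (by omega)
    conv_lhs => rw [ha]
    exact typeWeight_threeType m hr hrn hj

noncomputable def rankExponent (m : ℕ → ℝ) (n r : ℕ) : ℝ :=
  2 * m 1 * m 3 / (3 * m 2 ^ 2) * (r : ℝ) ^ 2 / ((n : ℝ) - 2 * r)

variable {m : ℕ → ℝ} {n r : ℕ}

lemma rankExponent_nonneg (hm : ∀ i, 0 ≤ m i) (hrn : 2 * r < n) : 0 ≤ rankExponent m n r := by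
  have : (2 * r : ℝ) < n := by exact_mod_cast hrn
  have := hm 1
  have := hm 3
  exact div_nonneg (by positivity) (by linarith)

lemma threeTypeWeight_nonneg (hm : ∀ i, 0 ≤ m i) (j : ℕ) : 0 ≤ threeTypeWeight m n r j := by
  have := hm 1
  have := hm 2
  have := hm 3
  unfold threeTypeWeight
  positivity

lemma threeTypeWeight_succ_mul (k : ℕ) (hk : 2 * (k + 1) ≤ r) :
    threeTypeWeight m n r (k + 1) * (3 * m 2 ^ 2 * ((n - 2 * r + k : ℕ) + 1) * (k + 1)) =
      threeTypeWeight m n r k * (2 * m 1 * m 3 * (r - 2 * k : ℕ) * (r - 2 * k - 1 : ℕ)) := by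
  obtain ⟨c, hc⟩ : ∃ c, r - 2 * k = c + 2 := ⟨r - 2 * k - 2, by omega⟩
  rw [threeTypeWeight, threeTypeWeight, show r - 2 * (k + 1) = c by omega,
    show r - 2 * k - 1 = c + 1 by omega, ← add_assoc, hc]
  simp only [Nat.factorial_succ, pow_succ]
  push_cast
  field_simp
  ring

lemma threeTypeWeight_succ_le (hm : ∀ i, 0 ≤ m i) (hm2 : 0 < m 2) (hrn : 2 * r < n) (k : ℕ)
    (hk : 2 * (k + 1) ≤ r) :
    threeTypeWeight m n r (k + 1) ≤ threeTypeWeight m n r k * (rankExponent m n r / (k + 1)) := by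
  have hgap : (0 : ℝ) < n - 2 * r := by
    have : (2 * r : ℝ) < n := by exact_mod_cast hrn
    linarith
  have hden : (n : ℝ) - 2 * r ≤ (n - 2 * r + k : ℕ) + 1 := by
    have : ((n - 2 * r : ℕ) : ℝ) = n - 2 * r := by push_cast [Nat.cast_sub hrn.le]; ring
    have : ((n - 2 * r : ℕ) : ℝ) ≤ (n - 2 * r + k : ℕ) := by exact_mod_cast Nat.le_add_right _ _
    linarith
  have hnum : ((r - 2 * k : ℕ) : ℝ) * (r - 2 * k - 1 : ℕ) ≤ r ^ 2 := by
    rw [sq]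
    gcongr <;> exact_mod_cast (by omega)
  have h1 := hm 1
  have h3 := hm 3
  have hW := threeTypeWeight_nonneg (n := n) (r := r) hm k
  calc threeTypeWeight m n r (k + 1)
      = threeTypeWeight m n r k * (2 * m 1 * m 3 * (r - 2 * k : ℕ) * (r - 2 * k - 1 : ℕ)) /
          (3 * m 2 ^ 2 * ((n - 2 * r + k : ℕ) + 1) * (k + 1)) := by
        rw [eq_div_iff (by positivity), threeTypeWeight_succ_mul k hk]
    _ ≤ threeTypeWeight m n r k * (2 * m 1 * m 3 * r ^ 2) /
          (3 * m 2 ^ 2 * (n - 2 * r) * (k + 1)) := by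
        rw [mul_assoc (2 * m 1 * m 3)]
        gcongr
    _ = threeTypeWeight m n r k * (rankExponent m n r / (k + 1)) := by
        rw [rankExponent]
        field_simp

lemma threeTypeWeight_le (hm : ∀ i, 0 ≤ m i) (hm2 : 0 < m 2) (hrn : 2 * r < n) {j : ℕ}
    (hj : 2 * j ≤ r) :
    threeTypeWeight m n r j ≤ threeTypeWeight m n r 0 * (rankExponent m n r ^ j / j !) := by
  induction j with
  | zero => simp
  | succ k ih =>
    have hy := rankExponent_nonneg hm hrn
    calc threeTypeWeight m n r (k + 1)
        ≤ threeTypeWeight m n r k * (rankExponent m n r / (k + 1)) :=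
          threeTypeWeight_succ_le hm hm2 hrn k hj
      _ ≤ threeTypeWeight m n r 0 * (rankExponent m n r ^ k / k !) *
            (rankExponent m n r / (k + 1)) := by
          gcongr
          exact ih (by omega)
      _ = threeTypeWeight m n r 0 * (rankExponent m n r ^ (k + 1) / (k + 1)!) := by
          push_cast [Nat.factorial_succ]
          field_simp
          ring

lemma threeTypeWeight_zero_le (hm : ∀ i, 0 ≤ m i) (hr : 0 < r) (hrn : 2 * r < n) :
    threeTypeWeight m n r 0 ≤ assemblyCount m n (n - r) := by
  rw [← typeWeight_threeType m hr hrn (Nat.zero_le _)]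
  refine single_le_sum (f := typeWeight m n) (fun a _ => ?_) ?_
  · exact mul_nonneg (Nat.cast_nonneg _) (prod_nonneg fun i _ => by have := hm i; positivity)
  · simp only [mem_filter, mem_univ, true_and]
    exact ⟨sum_mul_threeType hr hrn (Nat.zero_le _), sum_threeType hr hrn (Nat.zero_le _),
      threeType_val_eq_zero hrn (Nat.zero_le _) 0 (by simp) (by simp) (by simp)⟩

end Assembly

open Assembly in
theorem stmt_8_general (m : ℕ → ℝ) (hm : ∀ i, 0 ≤ m i)
    (h2 : 0 < m 2)
    (n r : ℕ) (hr : 0 < r) (hrn : 2 * r < n) :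
    assemblyCountL1eq3 m n (n - r) ≤
      (Real.exp (2 * m 1 * m 3 / (3 * (m 2) ^ 2) * (r : ℝ) ^ 2 / ((n : ℝ) - 2 * r)) - 1) *
        assemblyCount m n (n - r) := by
  have hy := rankExponent_nonneg hm hrn
  have hW₀ := threeTypeWeight_zero_le hm hr hrn
  calc assemblyCountL1eq3 m n (n - r)
      = ∑ j ∈ Icc 1 (r / 2), threeTypeWeight m n r j := assemblyCountL1eq3_eq_sum m hr hrn
    _ ≤ ∑ j ∈ Icc 1 (r / 2), threeTypeWeight m n r 0 * (rankExponent m n r ^ j / j !) :=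
        sum_le_sum fun j hj => threeTypeWeight_le hm h2 hrn (by rw [mem_Icc] at hj; omega)
    _ = threeTypeWeight m n r 0 * ∑ j ∈ Icc 1 (r / 2), rankExponent m n r ^ j / j ! :=
        (mul_sum ..).symm
    _ ≤ assemblyCount m n (n - r) * (Real.exp (rankExponent m n r) - 1) :=
        mul_le_mul hW₀ (Real.sum_Icc_pow_div_factorial_le_exp_sub_one hy _)
          (sum_nonneg fun j _ => by positivity) ((threeTypeWeight_nonneg hm 0).trans hW₀)
    _ = _ := mul_comm _ _

/-- picking uniformly among the M-assemblies of size n of rank r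
(k = n - r components), where m1, m2, m3 > 0 and 0 < r < n/2, the probability
that the largest component has size exactly 3 is at most e^y - 1 with
y = (2 m1 m3/(3 m2²)) r²/(n - 2r); equivalently (multiplying through by p(n,n-r)):
#(assemblies with L₁ = 3) ≤ (e^y - 1) · p(n, n-r). -/
theorem stmt_8 (m : ℕ → ℝ) (hm : ∀ i, 0 ≤ m i)
    (h1 : 0 < m 1) (h2 : 0 < m 2) (h3 : 0 < m 3)
    (n r : ℕ) (hr : 0 < r) (hrn : 2 * r < n) :
    assemblyCountL1eq3 m n (n - r) ≤
      (Real.exp (2 * m 1 * m 3 / (3 * (m 2) ^ 2) * (r : ℝ) ^ 2 / ((n : ℝ) - 2 * r)) - 1) *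
        assemblyCount m n (n - r) :=
  stmt_8_general m hm h2 n r hr hrn
end

section
/- Let m_i ≥ 0 with m_1 > 0, ρ := sup_{i ≥ 3} (m_i/i!)^{1/i} < ∞, and x > 0 with x ρ ≤ 1/2. Then ∑_{i ≥ 3} m_i x^i / i! ≤ 2 ρ³ x³, and if X has distribution P(X = i) = (m_{i+1} x^{i+1}/(i+1)!)/M(x) for i ≥ 0, then P(X ≥ 2) ≤ 2 ρ³ x² / m_1 and P(X ≥ 3) ≤ 2 ρ⁴ x³ / m_1. -/
open scoped Nat

/-!
For `i ≥ 3` the term `m_i x^i / i!` is at most `(xρ)^i`, so every tail `∑_{i ≥ k} m_i x^i / i!`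
with `k ≥ 3` is dominated by a geometric series of ratio `xρ ≤ 1/2`, hence by `2 (xρ)^k`.
Dividing by `M(x) ≥ m_1 x` gives the bounds on `P(X ≥ 2)` and `P(X ≥ 3)`.
-/

section GeometricTail

variable {a : ℕ → ℝ} {r : ℝ} {k : ℕ}

theorem summable_of_le_geometric_from (ha : ∀ n, 0 ≤ a n) (hr0 : 0 ≤ r) (hr1 : r < 1)
    (hak : ∀ n, k ≤ n → a n ≤ r ^ n) : Summable a := by
  have hgeo : Summable fun i => r ^ (i + k) :=
    (summable_nat_add_iff k).mpr (summable_geometric_of_lt_one hr0 hr1)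
  exact (summable_nat_add_iff k).mp <|
    .of_nonneg_of_le (fun i => ha _) (fun i => hak _ (Nat.le_add_left k i)) hgeo

theorem tsum_nat_add_le_of_le_geometric (ha : ∀ n, 0 ≤ a n) (hr0 : 0 ≤ r) (hr1 : r < 1)
    (hak : ∀ n, k ≤ n → a n ≤ r ^ n) : ∑' i, a (i + k) ≤ r ^ k / (1 - r) := by
  have hgeo : Summable fun i => r ^ (i + k) :=
    (summable_nat_add_iff k).mpr (summable_geometric_of_lt_one hr0 hr1)
  calc ∑' i, a (i + k)
      ≤ ∑' i, r ^ (i + k) :=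
        Summable.tsum_le_tsum (fun i => hak _ (Nat.le_add_left k i))
          ((summable_nat_add_iff k).mpr (summable_of_le_geometric_from ha hr0 hr1 hak)) hgeo
    _ = r ^ k / (1 - r) := by
        simp_rw [pow_add, tsum_mul_right, tsum_geometric_of_lt_one hr0 hr1]
        ring

theorem tsum_nat_add_le_two_mul_pow (ha : ∀ n, 0 ≤ a n) (hr0 : 0 ≤ r) (hr : r ≤ 1 / 2)
    (hak : ∀ n, k ≤ n → a n ≤ r ^ n) : ∑' i, a (i + k) ≤ 2 * r ^ k := by
  have hr1 : r < 1 := by linarith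
  calc ∑' i, a (i + k) ≤ r ^ k / (1 - r) := tsum_nat_add_le_of_le_geometric ha hr0 hr1 hak
    _ ≤ 2 * r ^ k := by
        rw [div_le_iff₀ (by linarith)]
        nlinarith [pow_nonneg hr0 k]

end GeometricTail

theorem mul_pow_div_factorial_le_pow {m : ℕ → ℝ} {ρ x : ℝ} {n : ℕ} (hx : 0 ≤ x)
    (hmn : m n / (n ! : ℝ) ≤ ρ ^ n) : m n * x ^ n / (n ! : ℝ) ≤ (x * ρ) ^ n := by
  calc m n * x ^ n / (n ! : ℝ) = m n / (n ! : ℝ) * x ^ n := by ring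
    _ ≤ ρ ^ n * x ^ n := mul_le_mul_of_nonneg_right hmn (pow_nonneg hx n)
    _ = (x * ρ) ^ n := by ring

/-- with m_i ≥ 0, m_1 > 0, ρ an upper bound for (m_i/i!)^{1/i} over
i ≥ 3 (i.e. m_i/i! ≤ ρ^i for i ≥ 3), and 0 < x with xρ ≤ 1/2:
∑_{i≥3} m_i x^i/i! ≤ 2ρ³x³; and for X with P(X = i) = (m_{i+1}x^{i+1}/(i+1)!)/M(x),
P(X ≥ 2) ≤ 2ρ³x²/m_1 and P(X ≥ 3) ≤ 2ρ⁴x³/m_1. -/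
theorem stmt_9 (m : ℕ → ℝ) (hm : ∀ i, 0 ≤ m i) (hm1 : 0 < m 1)
    (ρ x : ℝ) (hρ0 : 0 ≤ ρ)
    (hρ : ∀ i, 3 ≤ i → m i / (i ! : ℝ) ≤ ρ ^ i)
    (hx : 0 < x) (hxρ : x * ρ ≤ 1 / 2) :
    (∑' i : ℕ, m (i + 3) * x ^ (i + 3) / ((i + 3)! : ℝ)) ≤ 2 * ρ ^ 3 * x ^ 3 ∧
    (∑' i : ℕ, m (i + 3) * x ^ (i + 3) / ((i + 3)! : ℝ)) /
        (∑' i : ℕ, m (i + 1) * x ^ (i + 1) / ((i + 1)! : ℝ)) ≤ 2 * ρ ^ 3 * x ^ 2 / m 1 ∧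
    (∑' i : ℕ, m (i + 4) * x ^ (i + 4) / ((i + 4)! : ℝ)) /
        (∑' i : ℕ, m (i + 1) * x ^ (i + 1) / ((i + 1)! : ℝ)) ≤ 2 * ρ ^ 4 * x ^ 3 / m 1 := by
  let a : ℕ → ℝ := fun n => m n * x ^ n / (n ! : ℝ)
  have ha : ∀ n, 0 ≤ a n := fun n => by positivity [hm n]
  have hr0 : 0 ≤ x * ρ := mul_nonneg hx.le hρ0
  have hak : ∀ n, 3 ≤ n → a n ≤ (x * ρ) ^ n := fun n hn =>
    mul_pow_div_factorial_le_pow hx.le (hρ n hn)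
  have htail : ∀ k, 3 ≤ k → ∑' i, a (i + k) ≤ 2 * (x * ρ) ^ k := fun k hk =>
    tsum_nat_add_le_two_mul_pow ha hr0 hxρ fun n hn => hak n (hk.trans hn)
  have hM : m 1 * x ≤ ∑' i, a (i + 1) := by
    have hsum : Summable a := summable_of_le_geometric_from ha hr0 (by linarith) hak
    simpa [a] using ((summable_nat_add_iff 1).mpr hsum).le_tsum 0 fun j _ => ha (j + 1)
  have hratio : ∀ k, 3 ≤ k →
      (∑' i, a (i + k)) / ∑' i, a (i + 1) ≤ 2 * (x * ρ) ^ k / (m 1 * x) :=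
    fun k hk => div_le_div₀ (by positivity) (htail k hk) (mul_pos hm1 hx) hM
  refine ⟨?_, ?_, ?_⟩
  · exact (htail 3 le_rfl).trans_eq (by ring)
  · convert hratio 3 le_rfl using 1
    field_simp
  · convert hratio 4 (by norm_num) using 1
    field_simp
end

section
/- Let X_1,...,X_k be i.i.d. nonnegative-integer random variables with P(X = i) = (m_{i+1} x^{i+1}/(i+1)!)/M(x), where m_1, m_2 > 0, ρ := sup_{i≥3}(m_i/i!)^{1/i} < ∞, x = 2 m_1 r / (m_2 (n - 2r)), k = n - r, 0 < r < n/2, and assume xρ ≤ 1/2 and 2 k ρ³ x² / m_1 ≤ 1/2. Then P(X_1 + ... + X_k = r) ≥ 1/(2 c_0 √(2π r)) with c_0 = e/√(2π). -/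
/-!
Write `p i = P(X = i)`. The value of `x` makes `p 1 * (k - r) = p 0 * r`, so
`p 1 = (r / k) S` and `p 0 = ((k - r) / k) S` with `S = p 0 + p 1`. The event that exactly `r`
of the `X_j` equal `1` and the others `0` forces `∑ X_j = r`, hence
`P(∑ X_j = r) ≥ C(k, r) p 1 ^ r p 0 ^ (k - r) = C(k, r) (r/k)^r (1 - r/k)^(k-r) S ^ k`.
The binomial point probability is at least `1 / (e √r)`: Stirling gives `r! ≤ e √r (r/e)^r`,
and `k^k ≤ e^r (k-r)^(k-r) k(k-1)⋯(k-r+1)` telescopes from `(j+1)^(j+1) ≤ e (j+1) j^j`.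
The tail `∑_{i ≥ 2} p i` is at most `2 (xρ)³ / (m₁ x) ≤ 1 / (2k)`, so `S ^ k ≥ 1/2` by
Bernoulli's inequality.
-/

open MeasureTheory ProbabilityTheory Finset
open scoped Nat ENNReal

section Binomial

open Real

lemma add_one_pow_le_exp_mul_pow (j : ℕ) : ((j : ℝ) + 1) ^ j ≤ exp 1 * (j : ℝ) ^ j := by
  rcases j.eq_zero_or_pos with rfl | hj
  · simp
  · have hj' : (0 : ℝ) < j := by exact_mod_cast hj
    calc ((j : ℝ) + 1) ^ j = (1 + (j : ℝ)⁻¹) ^ j * (j : ℝ) ^ j := by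
          rw [← mul_pow, add_mul, inv_mul_cancel₀ hj'.ne', one_mul, add_comm]
      _ ≤ exp 1 * (j : ℝ) ^ j := by gcongr; exact one_add_inv_pow_le_exp

lemma pow_self_le_exp_pow_mul_descFactorial (d r : ℕ) :
    ((d + r : ℕ) : ℝ) ^ (d + r) ≤ exp 1 ^ r * (d : ℝ) ^ d * (d + r).descFactorial r := by
  induction r with
  | zero => simp
  | succ r ih =>
    rw [← add_assoc, Nat.succ_descFactorial_succ]
    push_cast at ih ⊢
    calc ((d : ℝ) + r + 1) ^ (d + r + 1) = ((d : ℝ) + r + 1) * ((d : ℝ) + r + 1) ^ (d + r) :=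
          pow_succ' _ _
      _ ≤ ((d : ℝ) + r + 1) * (exp 1 * ((d : ℝ) + r) ^ (d + r)) := by
          gcongr; exact_mod_cast add_one_pow_le_exp_mul_pow (d + r)
      _ ≤ ((d : ℝ) + r + 1) * (exp 1 * (exp 1 ^ r * (d : ℝ) ^ d * (d + r).descFactorial r)) := by
          gcongr
      _ = exp 1 ^ (r + 1) * (d : ℝ) ^ d * (((d : ℝ) + r + 1) * (d + r).descFactorial r) := by
          ring

lemma factorial_le_exp_mul_sqrt_mul_pow {r : ℕ} (hr : 0 < r) :
    (r ! : ℝ) ≤ exp 1 * √r * ((r : ℝ) / exp 1) ^ r := by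
  have hseq : Stirling.stirlingSeq r ≤ exp 1 / √2 := by
    obtain ⟨s, rfl⟩ := Nat.exists_eq_add_of_le' hr
    simpa [Stirling.stirlingSeq_one] using Stirling.stirlingSeq'_antitone (Nat.zero_le s)
  have hpos : 0 < √(2 * r) * ((r : ℝ) / exp 1) ^ r := by positivity
  rw [Stirling.stirlingSeq, div_le_iff₀ hpos] at hseq
  calc (r ! : ℝ) ≤ exp 1 / √2 * (√(2 * r) * ((r : ℝ) / exp 1) ^ r) := hseq
    _ = exp 1 * √r * ((r : ℝ) / exp 1) ^ r := by
        rw [sqrt_mul zero_le_two]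
        field_simp

lemma inv_exp_mul_sqrt_le_choose_mul_pow_mul_pow {r : ℕ} (hr : 0 < r) (d : ℕ) :
    1 / (exp 1 * √r) ≤
      (d + r).choose r * ((r : ℝ) / (d + r)) ^ r * ((d : ℝ) / (d + r)) ^ d := by
  have hchoose : ((d + r).descFactorial r : ℝ) = r ! * (d + r).choose r := by
    exact_mod_cast Nat.descFactorial_eq_factorial_mul_choose (d + r) r
  have hpow := pow_self_le_exp_pow_mul_descFactorial d r
  have hfac := factorial_le_exp_mul_sqrt_mul_pow hr
  push_cast at hpow
  have key : ((d : ℝ) + r) ^ (d + r) ≤ exp 1 * √r * r ^ r * d ^ d * (d + r).choose r := by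
    refine le_of_mul_le_mul_left ?_ (by positivity : (0 : ℝ) < r !)
    calc (r ! : ℝ) * ((d : ℝ) + r) ^ (d + r)
        ≤ (exp 1 * √r * ((r : ℝ) / exp 1) ^ r) *
            (exp 1 ^ r * d ^ d * (d + r).descFactorial r) := by gcongr
      _ = r ! * (exp 1 * √r * r ^ r * d ^ d * (d + r).choose r) := by
          rw [hchoose, div_pow]
          field_simp
  have hr' : (0 : ℝ) < r := by exact_mod_cast hr
  rw [div_pow, div_pow]
  field_simp
  rw [← pow_add, add_comm r d]
  linarith

lemma one_half_le_pow_of_one_sub_le {S : ℝ} {k : ℕ} (hS : 1 - 1 / (2 * k) ≤ S) :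
    1 / 2 ≤ S ^ k := by
  have hk : (k : ℝ) * (1 / (2 * k)) ≤ 1 / 2 := by
    rw [mul_one_div, div_mul_eq_div_div_swap, div_le_div_iff_of_pos_right two_pos]
    exact div_self_le_one _
  have hk' : 1 / (2 * (k : ℝ)) ≤ 1 / 2 := by
    rcases k.eq_zero_or_pos with rfl | hk0
    · norm_num
    · gcongr
      norm_num
      exact_mod_cast hk0
  calc (1 : ℝ) / 2 ≤ 1 + k * (S - 1) := by nlinarith [Nat.cast_nonneg (α := ℝ) k]
    _ ≤ S ^ k := one_add_mul_sub_le_pow (by linarith) k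

lemma pow_mul_pow_eq_of_mul_eq_mul {a b : ℝ} {d r : ℕ} (h : a * d = b * r) (hk : 0 < d + r) :
    a ^ r * b ^ d = ((r : ℝ) / (d + r)) ^ r * ((d : ℝ) / (d + r)) ^ d * (a + b) ^ (d + r) := by
  have hk' : (0 : ℝ) < d + r := by exact_mod_cast hk
  have ha : a = r / (d + r) * (a + b) := by field_simp; linarith
  have hb : b = d / (d + r) * (a + b) := by field_simp; linarith
  calc a ^ r * b ^ d = (r / (d + r) * (a + b)) ^ r * (d / (d + r) * (a + b)) ^ d := by
        rw [← ha, ← hb]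
    _ = _ := by rw [mul_pow, mul_pow, pow_add]; ring

lemma inv_two_mul_exp_mul_sqrt_le_choose_mul_pow_mul_pow {a b : ℝ} {d r : ℕ} (hr : 0 < r)
    (h : a * d = b * r) (hab : 1 - 1 / (2 * (d + r : ℕ)) ≤ a + b) :
    1 / (2 * exp 1 * √r) ≤ (d + r).choose r * a ^ r * b ^ d := by
  calc 1 / (2 * exp 1 * √r) = 1 / (exp 1 * √r) * (1 / 2) := by field_simp
    _ ≤ ((d + r).choose r * ((r : ℝ) / (d + r)) ^ r * ((d : ℝ) / (d + r)) ^ d) *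
          (a + b) ^ (d + r) :=
        mul_le_mul (inv_exp_mul_sqrt_le_choose_mul_pow_mul_pow hr d)
          (one_half_le_pow_of_one_sub_le hab) (by norm_num) (by positivity)
    _ = (d + r).choose r * a ^ r * b ^ d := by
        rw [mul_assoc _ (a ^ r), pow_mul_pow_eq_of_mul_eq_mul h (by omega)]
        ring

end Binomial

lemma eq_filter_of_forall_eq_ite {ι : Type*} [Fintype ι] [DecidableEq ι] {s : Finset ι}
    {v : ι → ℕ} (hv : ∀ j, v j = if j ∈ s then 1 else 0) : s = univ.filter (v · = 1) := by
  ext j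
  by_cases hj : j ∈ s <;> simp [hj, hv j]

lemma ofReal_natCast_mul_pow_mul_pow (n : ℕ) {a b : ℝ} (ha : 0 ≤ a) (hb : 0 ≤ b) (r d : ℕ) :
    ENNReal.ofReal (n * a ^ r * b ^ d) = n * ENNReal.ofReal a ^ r * ENNReal.ofReal b ^ d := by
  rw [ENNReal.ofReal_mul (by positivity), ENNReal.ofReal_mul (by positivity),
    ENNReal.ofReal_pow ha, ENNReal.ofReal_pow hb, ENNReal.ofReal_natCast]

theorem choose_mul_pow_mul_pow_le_measure_sum_eq {Ω : Type*} [MeasurableSpace Ω]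
    {μ : Measure Ω} {k : ℕ} {X : Fin k → Ω → ℕ} (hmeas : ∀ j, Measurable (X j))
    (hindep : iIndepFun X μ) {P : ℕ → ℝ≥0∞} (hP : ∀ j i, μ {ω | X j ω = i} = P i) (r : ℕ) :
    k.choose r * P 1 ^ r * P 0 ^ (k - r) ≤ μ {ω | ∑ j, X j ω = r} := by
  let E : Finset (Fin k) → Set Ω := fun s => ⋂ j, {ω | X j ω = if j ∈ s then 1 else 0}
  have hE : ∀ s, ∀ ω ∈ E s, s = univ.filter (X · ω = 1) := fun s ω hω =>
    eq_filter_of_forall_eq_ite (Set.mem_iInter.mp hω)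
  have hE_meas : ∀ s, MeasurableSet (E s) := fun s =>
    .iInter fun j => hmeas j (measurableSet_singleton _)
  have hE_disj :
      (↑(powersetCard r (univ : Finset (Fin k))) : Set (Finset (Fin k))).PairwiseDisjoint E :=
    fun s _ t _ hst =>
      Set.disjoint_left.mpr fun ω hs ht => hst ((hE s ω hs).trans (hE t ω ht).symm)
  have hE_sub : ∀ s ∈ powersetCard r univ, E s ⊆ {ω | ∑ j, X j ω = r} := by
    intro s hs ω hω
    rw [mem_powersetCard_univ] at hs
    have hsum : ∑ j, X j ω = ∑ j, if j ∈ s then 1 else 0 :=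
      sum_congr rfl fun j _ => Set.mem_iInter.mp hω j
    simp [hsum, hs]
  have hE_measure : ∀ s ∈ powersetCard r univ, μ (E s) = P 1 ^ r * P 0 ^ (k - r) := by
    intro s hs
    rw [mem_powersetCard_univ] at hs
    rw [hindep.meas_iInter (s := fun j => {ω | X j ω = if j ∈ s then 1 else 0})
      fun j => ⟨{_}, measurableSet_singleton _, rfl⟩]
    simp_rw [hP, apply_ite P, prod_ite, prod_const]
    simp [filter_not, card_sdiff, hs]
  calc k.choose r * P 1 ^ r * P 0 ^ (k - r) = ∑ s ∈ powersetCard r univ, μ (E s) := by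
        rw [sum_congr rfl hE_measure, sum_const, card_powersetCard, card_univ, Fintype.card_fin,
          nsmul_eq_mul, mul_assoc]
    _ = μ (⋃ s ∈ powersetCard r univ, E s) :=
        (measure_biUnion_finset hE_disj fun s _ => hE_meas s).symm
    _ ≤ μ {ω | ∑ j, X j ω = r} := measure_mono (Set.iUnion₂_subset hE_sub)

lemma one_sub_div_le_div_tsum {q : ℕ → ℝ} {t : ℝ} (hq : ∀ i, 0 ≤ q i) (hq0 : 0 < q 0)
    (ht0 : 0 ≤ t) (ht : t ≤ 1 / 2) (hqt : ∀ i, 2 ≤ i → q i ≤ t ^ (i + 1)) :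
    1 - 2 * t ^ 3 / q 0 ≤ (q 0 + q 1) / ∑' i, q i := by
  have hgeo : HasSum (fun i => t ^ (i + 3)) (t ^ 3 * (1 - t)⁻¹) := by
    simpa only [pow_add, mul_comm] using
      (hasSum_geometric_of_lt_one ht0 (by linarith)).mul_left (t ^ 3)
  have htail_le : ∀ i, q (i + 2) ≤ t ^ (i + 3) := fun i => hqt (i + 2) (by omega)
  have htail_summable : Summable fun i => q (i + 2) :=
    hgeo.summable.of_nonneg_of_le (fun i => hq _) htail_le
  have htail : ∑' i, q (i + 2) ≤ 2 * t ^ 3 :=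
    calc ∑' i, q (i + 2) ≤ t ^ 3 * (1 - t)⁻¹ := hasSum_le htail_le htail_summable.hasSum hgeo
      _ ≤ t ^ 3 * 2 := by
          gcongr
          rw [inv_le_comm₀ (by linarith) two_pos]
          linarith
      _ = 2 * t ^ 3 := mul_comm _ _
  have hsplit : ∑' i, q i = q 0 + q 1 + ∑' i, q (i + 2) := by
    rw [← htail_summable.sum_add_tsum_nat_add', sum_range_succ, sum_range_one]
  have htail_nonneg : 0 ≤ ∑' i, q (i + 2) := tsum_nonneg fun i => hq _
  have hq0_le : q 0 ≤ ∑' i, q i := by rw [hsplit]; linarith [hq 1]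
  have hM : 0 < ∑' i, q i := hq0.trans_le hq0_le
  have hc : 2 * t ^ 3 ≤ 2 * t ^ 3 / q 0 * ∑' i, q i := by
    rw [div_mul_eq_mul_div, le_div_iff₀ hq0]
    gcongr
  rw [le_div_iff₀ hM, sub_mul, one_mul]
  linarith

noncomputable def weight (m : ℕ → ℝ) (x : ℝ) (i : ℕ) : ℝ :=
  m (i + 1) * x ^ (i + 1) / ((i + 1)! : ℝ)

section Weight

variable {m : ℕ → ℝ} {x : ℝ}

lemma weight_zero : weight m x 0 = m 1 * x := by simp [weight]

lemma weight_one : weight m x 1 = m 2 * x ^ 2 / 2 := by norm_num [weight]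

lemma weight_nonneg (hm : ∀ i, 0 ≤ m i) (hx : 0 ≤ x) (i : ℕ) : 0 ≤ weight m x i := by
  have := hm (i + 1)
  unfold weight
  positivity

lemma weight_le_pow {ρ : ℝ} (hρ : ∀ i, 3 ≤ i → m i / (i ! : ℝ) ≤ ρ ^ i) (hx : 0 ≤ x) {i : ℕ}
    (hi : 2 ≤ i) : weight m x i ≤ (x * ρ) ^ (i + 1) :=
  calc weight m x i = m (i + 1) / ((i + 1)! : ℝ) * x ^ (i + 1) := by
        rw [weight, mul_div_right_comm]
    _ ≤ ρ ^ (i + 1) * x ^ (i + 1) := by gcongr; exact hρ (i + 1) (by omega)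
    _ = (x * ρ) ^ (i + 1) := by rw [mul_pow, mul_comm]

lemma one_sub_inv_le_weight_div_tsum (hm : ∀ i, 0 ≤ m i) (h1 : 0 < m 1) {ρ : ℝ} (hρ0 : 0 ≤ ρ)
    (hρ : ∀ i, 3 ≤ i → m i / (i ! : ℝ) ≤ ρ ^ i) (hx : 0 < x) (hxρ : x * ρ ≤ 1 / 2) {k : ℕ}
    (hk : 0 < k) (hsmall : 2 * (k : ℝ) * ρ ^ 3 * x ^ 2 / m 1 ≤ 1 / 2) :
    1 - 1 / (2 * k) ≤ (weight m x 0 + weight m x 1) / ∑' i, weight m x i := by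
  have h0 : 0 < weight m x 0 := by rw [weight_zero]; positivity
  have htail : 2 * (x * ρ) ^ 3 / weight m x 0 ≤ 1 / (2 * k) := by
    rw [weight_zero, le_div_iff₀ (by positivity)]
    linarith [show 2 * (x * ρ) ^ 3 / (m 1 * x) * (2 * k) = 2 * (2 * k * ρ ^ 3 * x ^ 2 / m 1) by
      field_simp]
  linarith [one_sub_div_le_div_tsum (weight_nonneg hm hx.le) h0 (by positivity) hxρ
    (fun i hi => weight_le_pow hρ hx.le hi)]

lemma weight_one_mul_eq_weight_zero_mul {d r : ℝ} (h2 : m 2 ≠ 0) (hd : d ≠ 0)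
    (hx : x = 2 * m 1 * r / (m 2 * d)) : weight m x 1 * d = weight m x 0 * r := by
  rw [weight_zero, weight_one, hx]
  field_simp

end Weight

theorem stmt_10_general (m : ℕ → ℝ) (hm : ∀ i, 0 ≤ m i) (h1 : 0 < m 1) (h2 : 0 < m 2)
    (ρ : ℝ) (hρ0 : 0 ≤ ρ) (hρ : ∀ i, 3 ≤ i → m i / (i ! : ℝ) ≤ ρ ^ i)
    (n r k : ℕ) (hr : 0 < r) (hrn : 2 * r < n) (hk : k = n - r)
    (x : ℝ) (hx : x = 2 * m 1 * (r : ℝ) / (m 2 * ((n : ℝ) - 2 * r)))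
    (hxρ : x * ρ ≤ 1 / 2)
    (hsmall : 2 * (k : ℝ) * ρ ^ 3 * x ^ 2 / m 1 ≤ 1 / 2)
    {Ω : Type} [MeasurableSpace Ω] (μ : Measure Ω)
    (X : Fin k → Ω → ℕ) (hmeas : ∀ j, Measurable (X j))
    (hindep : iIndepFun X μ)
    (hdist : ∀ j, ∀ i : ℕ, μ {ω | X j ω = i} = ENNReal.ofReal
      ((m (i + 1) * x ^ (i + 1) / ((i + 1)! : ℝ)) /
        (∑' l : ℕ, m (l + 1) * x ^ (l + 1) / ((l + 1)! : ℝ)))) :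
    ENNReal.ofReal (1 / (2 * (Real.exp 1 / Real.sqrt (2 * Real.pi)) *
        Real.sqrt (2 * Real.pi * r))) ≤
      μ {ω | (∑ j, X j ω) = r} := by
  obtain ⟨d, rfl⟩ : ∃ d, k = d + r := ⟨n - 2 * r, by omega⟩
  have hd : (n : ℝ) - 2 * r = d := by
    rw [← Nat.sub_add_cancel hrn.le, show n - 2 * r = d by omega]
    push_cast
    ring
  rw [hd] at hx
  have hd0 : (0 : ℝ) < d := by exact_mod_cast (by omega : 0 < d)
  have hx0 : 0 < x := by rw [hx]; positivity
  set M := ∑' l, weight m x l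
  have hp : ∀ i, 0 ≤ weight m x i / M := fun i =>
    div_nonneg (weight_nonneg hm hx0.le i) (tsum_nonneg (weight_nonneg hm hx0.le))
  have hS : 1 - 1 / (2 * (d + r : ℕ)) ≤ weight m x 1 / M + weight m x 0 / M := by
    rw [← add_div, add_comm (weight m x 1)]
    exact one_sub_inv_le_weight_div_tsum hm h1 hρ0 hρ hx0 hxρ (by omega) hsmall
  have hratio : weight m x 1 / M * d = weight m x 0 / M * r := by
    rw [div_mul_eq_mul_div, div_mul_eq_mul_div,
      weight_one_mul_eq_weight_zero_mul h2.ne' hd0.ne' hx]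
  calc ENNReal.ofReal (1 / (2 * (Real.exp 1 / Real.sqrt (2 * Real.pi)) *
        Real.sqrt (2 * Real.pi * r)))
      = ENNReal.ofReal (1 / (2 * Real.exp 1 * √r)) := by
        rw [Real.sqrt_mul (by positivity : (0 : ℝ) ≤ 2 * Real.pi) r]
        field_simp
    _ ≤ ENNReal.ofReal ((d + r).choose r * (weight m x 1 / M) ^ r * (weight m x 0 / M) ^ d) :=
        ENNReal.ofReal_le_ofReal (inv_two_mul_exp_mul_sqrt_le_choose_mul_pow_mul_pow hr hratio hS)
    _ = (d + r).choose r * ENNReal.ofReal (weight m x 1 / M) ^ r *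
          ENNReal.ofReal (weight m x 0 / M) ^ (d + r - r) := by
        rw [Nat.add_sub_cancel, ofReal_natCast_mul_pow_mul_pow _ (hp 1) (hp 0)]
    _ ≤ μ {ω | (∑ j, X j ω) = r} :=
        choose_mul_pow_mul_pow_le_measure_sum_eq (P := fun i => ENNReal.ofReal (weight m x i / M))
          hmeas hindep hdist r

/-- with X_1,...,X_k i.i.d., P(X = i) = (m_{i+1}x^{i+1}/(i+1)!)/M(x),
m_1, m_2 > 0, ρ ≥ (m_i/i!)^{1/i} for i ≥ 3, x = 2m_1 r/(m_2(n-2r)), k = n-r,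
0 < r < n/2, xρ ≤ 1/2 and 2kρ³x²/m_1 ≤ 1/2:
P(X_1 + ⋯ + X_k = r) ≥ 1/(2 c₀ √(2πr)) where c₀ = e/√(2π). -/
theorem stmt_10 (m : ℕ → ℝ) (hm : ∀ i, 0 ≤ m i) (h1 : 0 < m 1) (h2 : 0 < m 2)
    (ρ : ℝ) (hρ0 : 0 ≤ ρ) (hρ : ∀ i, 3 ≤ i → m i / (i ! : ℝ) ≤ ρ ^ i)
    (n r k : ℕ) (hr : 0 < r) (hrn : 2 * r < n) (hk : k = n - r)
    (x : ℝ) (hx : x = 2 * m 1 * (r : ℝ) / (m 2 * ((n : ℝ) - 2 * r)))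
    (hxρ : x * ρ ≤ 1 / 2)
    (hsmall : 2 * (k : ℝ) * ρ ^ 3 * x ^ 2 / m 1 ≤ 1 / 2)
    {Ω : Type} [MeasurableSpace Ω] (μ : Measure Ω) [IsProbabilityMeasure μ]
    (X : Fin k → Ω → ℕ) (hmeas : ∀ j, Measurable (X j))
    (hindep : iIndepFun X μ)
    (hdist : ∀ j, ∀ i : ℕ, μ {ω | X j ω = i} = ENNReal.ofReal
      ((m (i + 1) * x ^ (i + 1) / ((i + 1)! : ℝ)) /
        (∑' l : ℕ, m (l + 1) * x ^ (l + 1) / ((l + 1)! : ℝ)))) :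
    ENNReal.ofReal (1 / (2 * (Real.exp 1 / Real.sqrt (2 * Real.pi)) *
        Real.sqrt (2 * Real.pi * r))) ≤
      μ {ω | (∑ j, X j ω) = r} :=
  stmt_10_general m hm h1 h2 ρ hρ0 hρ n r k hr hrn hk x hx hxρ hsmall μ X hmeas hindep hdist
end

section
/- For the binomial distribution, the point probability at the mean satisfies a uniform lower bound: for all k ≥ 1 and 0 < p < 1 with r := kp a positive integer, P(Binomial(k,p) = r) ≥ 1/(c_0 √(2π r)) where c_0 = e/√(2π). -/
/-!
With `a n = n! eⁿ / nⁿ`, the binomial probability at the mean `r = kp` is exactly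
`a k / (a r * a (k - r))`, the powers of `e` cancelling because `r + (k - r) = k`.
The sequence `a` is increasing, since `a (n + 1) / a n = e / (1 + 1/n)ⁿ ≥ 1`, so the
probability is at least `1 / a r`; and `a r = √(2r) · stirlingSeq r ≤ √(2r) · stirlingSeq 1 = e √r`
because Stirling's sequence is decreasing.
-/

open scoped Nat
open Real

noncomputable def scaledFactorial (n : ℕ) : ℝ := n ! * exp n / n ^ n

lemma natCast_pow_self_pos (n : ℕ) : 0 < (n : ℝ) ^ n := by exact_mod_cast Nat.pow_self_pos

lemma scaledFactorial_pos (n : ℕ) : 0 < scaledFactorial n := by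
  have := natCast_pow_self_pos n
  unfold scaledFactorial
  positivity

lemma add_one_pow_le_exp_one_mul_pow (n : ℕ) : ((n : ℝ) + 1) ^ n ≤ exp 1 * n ^ n := by
  rcases eq_or_ne n 0 with rfl | hn
  · simp [one_le_exp zero_le_one]
  calc ((n : ℝ) + 1) ^ n = (1 + (n : ℝ)⁻¹) ^ n * n ^ n := by
        rw [← mul_pow]; congr 1; field_simp
    _ ≤ exp 1 * n ^ n := by gcongr; exact one_add_inv_pow_le_exp

lemma monotone_scaledFactorial : Monotone scaledFactorial := by
  refine monotone_nat_of_le_succ fun n => ?_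
  have hsucc : scaledFactorial (n + 1) = n ! * exp n * exp 1 / ((n : ℝ) + 1) ^ n := by
    simp only [scaledFactorial, Nat.factorial_succ, Nat.cast_mul, Nat.cast_succ, exp_add, pow_succ]
    field_simp
  have := natCast_pow_self_pos n
  rw [hsucc, scaledFactorial, div_le_div_iff₀ this (by positivity)]
  calc (n ! * exp n : ℝ) * ((n : ℝ) + 1) ^ n ≤ n ! * exp n * (exp 1 * n ^ n) := by
        gcongr; exact add_one_pow_le_exp_one_mul_pow n
    _ = _ := by ring

lemma scaledFactorial_le_exp_one_mul_sqrt {n : ℕ} (hn : n ≠ 0) :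
    scaledFactorial n ≤ exp 1 * √n := by
  have hseq : Stirling.stirlingSeq n ≤ exp 1 / √2 := by
    obtain ⟨j, rfl⟩ := Nat.exists_eq_add_of_le' (Nat.one_le_iff_ne_zero.mpr hn)
    simpa using Stirling.stirlingSeq'_antitone (Nat.zero_le j)
  have heq : scaledFactorial n = √2 * √n * Stirling.stirlingSeq n := by
    rw [scaledFactorial, Stirling.stirlingSeq, div_pow, ← Real.sqrt_mul zero_le_two, ← exp_one_pow]
    field_simp
  calc scaledFactorial n = √2 * √n * Stirling.stirlingSeq n := heq
    _ ≤ √2 * √n * (exp 1 / √2) := by gcongr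
    _ = exp 1 * √n := by field_simp

lemma choose_mul_pow_mul_pow_eq {r k : ℕ} (hrk : r ≤ k) :
    (k.choose r : ℝ) * ((r : ℝ) / k) ^ r * (((k - r : ℕ) : ℝ) / k) ^ (k - r) =
      scaledFactorial k / (scaledFactorial r * scaledFactorial (k - r)) := by
  obtain ⟨m, rfl⟩ := Nat.exists_eq_add_of_le hrk
  rcases eq_or_ne (r + m) 0 with h | h
  · obtain ⟨rfl, rfl⟩ := Nat.add_eq_zero_iff.mp h
    simp [scaledFactorial]
  have := natCast_pow_self_pos r
  have := natCast_pow_self_pos m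
  have : (0 : ℝ) < r + m := by exact_mod_cast Nat.pos_of_ne_zero h
  rw [Nat.add_sub_cancel_left, Nat.cast_choose ℝ hrk, Nat.add_sub_cancel_left]
  simp only [scaledFactorial, Nat.cast_add, exp_add, div_pow, pow_add]
  field_simp

theorem stmt_11_general (k r : ℕ) (p : ℝ) (hp1 : p < 1)
    (hr : 0 < r) (hmean : (k : ℝ) * p = (r : ℝ)) :
    1 / ((Real.exp 1 / Real.sqrt (2 * Real.pi)) * Real.sqrt (2 * Real.pi * r)) ≤
      (k.choose r : ℝ) * p ^ r * (1 - p) ^ (k - r) := by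
  have hk : (k : ℝ) ≠ 0 := by
    rintro hk
    rw [hk, zero_mul] at hmean
    exact hr.ne (by exact_mod_cast hmean)
  have hrk : r ≤ k := by
    have : (r : ℝ) ≤ k := by
      rw [← hmean]; exact mul_le_of_le_one_right k.cast_nonneg hp1.le
    exact_mod_cast this
  have hp : p = r / k := by rw [← hmean]; field_simp
  have hq : 1 - p = ((k - r : ℕ) : ℝ) / k := by rw [hp, Nat.cast_sub hrk]; field_simp
  have hconst : exp 1 / √(2 * π) * √(2 * π * r) = exp 1 * √r := by
    rw [Real.sqrt_mul (by positivity : (0 : ℝ) ≤ 2 * π)]; field_simp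
  rw [hconst, hq, hp, choose_mul_pow_mul_pow_eq hrk]
  have hk_pos := scaledFactorial_pos k
  have hr_pos := scaledFactorial_pos r
  calc 1 / (exp 1 * √r) ≤ 1 / scaledFactorial r :=
        one_div_le_one_div_of_le hr_pos (scaledFactorial_le_exp_one_mul_sqrt hr.ne')
    _ = scaledFactorial k / (scaledFactorial r * scaledFactorial k) := by field_simp
    _ ≤ scaledFactorial k / (scaledFactorial r * scaledFactorial (k - r)) := by
        have := scaledFactorial_pos (k - r)
        gcongr
        exact monotone_scaledFactorial (Nat.sub_le k r)

/-- for all k ≥ 1 and 0 < p < 1 with r := kp a positive integer,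
the binomial point probability at the mean satisfies
P(Binomial(k,p) = r) ≥ 1/(c₀ √(2πr)), with c₀ = e/√(2π). -/
theorem stmt_11 (k r : ℕ) (p : ℝ) (hk : 1 ≤ k) (hp : 0 < p) (hp1 : p < 1)
    (hr : 0 < r) (hmean : (k : ℝ) * p = (r : ℝ)) :
    1 / ((Real.exp 1 / Real.sqrt (2 * Real.pi)) * Real.sqrt (2 * Real.pi * r)) ≤
      (k.choose r : ℝ) * p ^ r * (1 - p) ^ (k - r) :=
  stmt_11_general k r p hp1 hr hmean
end

section
/- Let 0 < p < 1, n ∈ ℕ, λ = np, b(k;n,p) = C(n,k) p^k (1-p)^{n-k}, and p(k;λ) = λ^k e^{-λ}/k!. Then for 0 ≤ k ≤ n: p(k;λ) · exp(-k²/(n-k) - λ²/(n-λ)) < b(k;n,p) < p(k;λ) · exp(kλ/n). -/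
/-!
Write `b(k; n, p) = n (n - 1) ⋯ (n - k + 1) / k! · p^k (1 - p)^(n - k)`. The upper bound follows
from `n (n - 1) ⋯ (n - k + 1) ≤ n^k` and `1 - p < e^(-p)`. For the lower bound, use
`1 - x ≥ e^(-x / (1 - x))` for `x < 1`, both for each factor `1 - i / n` (where
`i / (n - i) ≤ k / (n - k)`) and for `1 - p`; it remains to note that
`(n - k) p / (1 - p) ≤ n p / (1 - p) = λ + λ² / (n - λ)`.
-/

open scoped Nat
open Finset Real

lemma Real.exp_neg_div_one_sub_le {x : ℝ} (hx : x < 1) : exp (-(x / (1 - x))) ≤ 1 - x := by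
  have hx' : 1 - x ≠ 0 := by linarith
  rw [exp_neg, inv_le_comm₀ (exp_pos _) (by linarith)]
  calc (1 - x)⁻¹ = x / (1 - x) + 1 := by field_simp; ring
    _ ≤ exp (x / (1 - x)) := add_one_le_exp _

lemma Real.exp_neg_div_one_sub_lt {x : ℝ} (hx0 : x ≠ 0) (hx : x < 1) :
    exp (-(x / (1 - x))) < 1 - x := by
  have hx' : 1 - x ≠ 0 := by linarith
  rw [exp_neg, inv_lt_comm₀ (exp_pos _) (by linarith)]
  calc (1 - x)⁻¹ = x / (1 - x) + 1 := by field_simp; ring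
    _ < exp (x / (1 - x)) := add_one_lt_exp (div_ne_zero hx0 hx')

lemma Real.mul_exp_neg_div_sub_le {n x : ℝ} (hn : 0 < n) (hx : x < n) :
    n * exp (-(x / (n - x))) ≤ n - x := by
  have h := exp_neg_div_one_sub_le ((div_lt_one hn).2 hx)
  rw [show x / n / (1 - x / n) = x / (n - x) by field_simp] at h
  calc n * exp (-(x / (n - x))) ≤ n * (1 - x / n) := by gcongr
    _ = n - x := by field_simp

lemma Nat.cast_descFactorial_eq_prod_range {R : Type*} [CommRing R] {n k : ℕ} (hk : k ≤ n) :
    (n.descFactorial k : R) = ∏ i ∈ range k, ((n : R) - i) := by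
  rw [Nat.descFactorial_eq_prod_range, Nat.cast_prod]
  exact prod_congr rfl fun i hi => Nat.cast_sub (by have := mem_range.1 hi; omega)

lemma Nat.pow_mul_exp_le_descFactorial {n k : ℕ} (hk : k < n) :
    (n : ℝ) ^ k * exp (-((k : ℝ) ^ 2 / ((n : ℝ) - k))) ≤ n.descFactorial k := by
  have hkn : (k : ℝ) < n := by exact_mod_cast hk
  have hfactor : ∀ i ∈ range k, (n : ℝ) * exp (-((k : ℝ) / ((n : ℝ) - k))) ≤ (n : ℝ) - i := by
    intro i hi
    have hik : (i : ℝ) < k := by exact_mod_cast mem_range.1 hi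
    calc (n : ℝ) * exp (-((k : ℝ) / ((n : ℝ) - k)))
        ≤ n * exp (-((i : ℝ) / ((n : ℝ) - i))) := by gcongr
      _ ≤ (n : ℝ) - i := mul_exp_neg_div_sub_le (by linarith) (by linarith)
  calc (n : ℝ) ^ k * exp (-((k : ℝ) ^ 2 / ((n : ℝ) - k)))
      = ∏ _i ∈ range k, (n : ℝ) * exp (-((k : ℝ) / ((n : ℝ) - k))) := by
        rw [prod_const, card_range, mul_pow, ← exp_nat_mul]
        congr 2
        ring
    _ ≤ ∏ i ∈ range k, ((n : ℝ) - i) :=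
        prod_le_prod (fun _ _ => by positivity) hfactor
    _ = n.descFactorial k := (Nat.cast_descFactorial_eq_prod_range hk.le).symm

lemma Real.one_sub_pow_lt_exp_neg_mul {p : ℝ} {m : ℕ} (hp0 : p ≠ 0) (hp1 : p ≤ 1) (hm : m ≠ 0) :
    (1 - p) ^ m < exp (-(m * p)) := by
  rw [← mul_neg, exp_nat_mul]
  exact pow_lt_pow_left₀ (one_sub_lt_exp_neg hp0) (by linarith) hm

lemma Real.exp_neg_mul_div_one_sub_lt_one_sub_pow {p : ℝ} {m : ℕ} (hp0 : p ≠ 0) (hp1 : p < 1)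
    (hm : m ≠ 0) : exp (-(m * (p / (1 - p)))) < (1 - p) ^ m := by
  rw [← mul_neg, exp_nat_mul]
  exact pow_lt_pow_left₀ (exp_neg_div_one_sub_lt hp0 hp1) (exp_pos _).le hm

lemma Nat.cast_choose_eq_descFactorial_div (n k : ℕ) :
    (n.choose k : ℝ) = n.descFactorial k / k ! := by
  rw [Nat.descFactorial_eq_factorial_mul_choose, Nat.cast_mul]
  field_simp

lemma binomial_lt_poisson_mul_exp {n k : ℕ} {p : ℝ} (hp : 0 < p) (hp1 : p ≤ 1) (hk : k < n) :
    (n.choose k : ℝ) * p ^ k * (1 - p) ^ (n - k) <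
      ((n : ℝ) * p) ^ k * exp (-((n : ℝ) * p)) / (k ! : ℝ) *
        exp ((k : ℝ) * ((n : ℝ) * p) / (n : ℝ)) := by
  have hn : (n : ℝ) ≠ 0 := Nat.cast_ne_zero.2 (by omega)
  calc (n.choose k : ℝ) * p ^ k * (1 - p) ^ (n - k)
      = n.descFactorial k / k ! * p ^ k * (1 - p) ^ (n - k) := by
        rw [Nat.cast_choose_eq_descFactorial_div]
    _ ≤ (n : ℝ) ^ k / k ! * p ^ k * (1 - p) ^ (n - k) := by
        gcongr
        exact_mod_cast Nat.descFactorial_le_pow n k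
    _ < (n : ℝ) ^ k / k ! * p ^ k * exp (-((n - k : ℕ) * p)) := by
        gcongr
        exact one_sub_pow_lt_exp_neg_mul hp.ne' hp1 (Nat.sub_ne_zero_of_lt hk)
    _ = ((n : ℝ) * p) ^ k * exp (-((n : ℝ) * p)) / (k ! : ℝ) *
          exp ((k : ℝ) * ((n : ℝ) * p) / (n : ℝ)) := by
        rw [Nat.cast_sub hk.le,
          show -(((n : ℝ) - k) * p) = -((n : ℝ) * p) + k * (n * p) / n by field_simp; ring,
          exp_add, mul_pow]
        ring

lemma poisson_mul_exp_lt_binomial {n k : ℕ} {p : ℝ} (hp : 0 < p) (hp1 : p < 1) (hk : k < n) :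
    ((n : ℝ) * p) ^ k * exp (-((n : ℝ) * p)) / (k ! : ℝ) *
        exp (-((k : ℝ) ^ 2 / ((n : ℝ) - k)) - ((n : ℝ) * p) ^ 2 / ((n : ℝ) - (n : ℝ) * p)) <
      (n.choose k : ℝ) * p ^ k * (1 - p) ^ (n - k) := by
  have hn : (n : ℝ) ≠ 0 := Nat.cast_ne_zero.2 (by omega)
  have hq : 1 - p ≠ 0 := by linarith
  -- `λ + λ² / (n - λ) = n p / (1 - p)` for `λ = n p`
  have hexp : exp (-((n : ℝ) * p)) * exp (-((k : ℝ) ^ 2 / ((n : ℝ) - k)) -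
      ((n : ℝ) * p) ^ 2 / ((n : ℝ) - (n : ℝ) * p)) =
      exp (-((k : ℝ) ^ 2 / ((n : ℝ) - k))) * exp (-(n * (p / (1 - p)))) := by
    rw [← exp_add, ← exp_add]
    congr 1
    field_simp
    ring
  calc ((n : ℝ) * p) ^ k * exp (-((n : ℝ) * p)) / (k ! : ℝ) *
        exp (-((k : ℝ) ^ 2 / ((n : ℝ) - k)) - ((n : ℝ) * p) ^ 2 / ((n : ℝ) - (n : ℝ) * p))
      = (n : ℝ) ^ k * p ^ k / k ! * (exp (-((n : ℝ) * p)) * exp (-((k : ℝ) ^ 2 /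
          ((n : ℝ) - k)) - ((n : ℝ) * p) ^ 2 / ((n : ℝ) - (n : ℝ) * p))) := by ring
    _ = ((n : ℝ) ^ k * exp (-((k : ℝ) ^ 2 / ((n : ℝ) - k)))) * p ^ k / k ! *
          exp (-(n * (p / (1 - p)))) := by rw [hexp]; ring
    _ ≤ n.descFactorial k * p ^ k / k ! * exp (-(n * (p / (1 - p)))) := by
        gcongr
        exact Nat.pow_mul_exp_le_descFactorial hk
    _ ≤ n.descFactorial k * p ^ k / k ! * exp (-((n - k : ℕ) * (p / (1 - p)))) := by
        gcongr
        exact_mod_cast Nat.sub_le n k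
    _ < n.descFactorial k * p ^ k / k ! * (1 - p) ^ (n - k) := by
        have : 0 < n.descFactorial k := Nat.descFactorial_pos.2 hk.le
        gcongr
        exact exp_neg_mul_div_one_sub_lt_one_sub_pow hp.ne' hp1 (Nat.sub_ne_zero_of_lt hk)
    _ = (n.choose k : ℝ) * p ^ k * (1 - p) ^ (n - k) := by
        rw [Nat.cast_choose_eq_descFactorial_div]
        ring

/-- Feller: for 0 < p < 1, λ = np, b(k;n,p) = C(n,k)p^k(1-p)^{n-k},
p(k;λ) = λ^k e^{-λ}/k!, and 0 ≤ k < n: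
p(k;λ)·exp(-k²/(n-k) - λ²/(n-λ)) < b(k;n,p) < p(k;λ)·exp(kλ/n). -/
theorem stmt_12 (n k : ℕ) (p : ℝ) (hp : 0 < p) (hp1 : p < 1) (hk : k < n) :
    ((n : ℝ) * p) ^ k * Real.exp (-((n : ℝ) * p)) / (k ! : ℝ) *
        Real.exp (-((k : ℝ) ^ 2 / ((n : ℝ) - k)) -
          ((n : ℝ) * p) ^ 2 / ((n : ℝ) - (n : ℝ) * p)) <
      (n.choose k : ℝ) * p ^ k * (1 - p) ^ (n - k) ∧
    (n.choose k : ℝ) * p ^ k * (1 - p) ^ (n - k) <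
      ((n : ℝ) * p) ^ k * Real.exp (-((n : ℝ) * p)) / (k ! : ℝ) *
        Real.exp ((k : ℝ) * ((n : ℝ) * p) / (n : ℝ)) :=
  ⟨poisson_mul_exp_lt_binomial hp hp1 hk, binomial_lt_poisson_mul_exp hp hp1.le hk⟩
end

section
/- Under the hypotheses m_1, m_2 > 0, ρ := sup_{i≥3}(m_i/i!)^{1/i} < ∞, 0 < r < n/2, k = n - r, x = 2m_1 r/(m_2(n-2r)), xρ ≤ 1/2, and 2kρ³x²/m_1 ≤ 1/2: picking an M-assembly uniformly from the p(n,k) assemblies of size n with k components, P(L_1 ≥ 4) ≤ (2kρ⁴x³/m_1) · 2 c_0 √(2π r), where c_0 = e/√(2π) and L_1 is the size of the largest component. -/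
open Finset
open scoped Nat

/-- The number of M-assemblies of size n with exactly k components whose largest
component has size at least 4. -/
noncomputable def assemblyCountL1ge4 (m : ℕ → ℝ) (n k : ℕ) : ℝ :=
  ∑ a ∈ Finset.univ.filter (fun a : Fin (n + 1) → Fin (n + 1) =>
      (∑ i : Fin (n + 1), i.1 * (a i).1) = n ∧ (∑ i : Fin (n + 1), (a i).1) = k ∧
        (a 0).1 = 0 ∧ (∃ i : Fin (n + 1), 4 ≤ i.1 ∧ (a i).1 ≠ 0)),
    (n ! : ℝ) * ∏ i : Fin (n + 1),
      m i.1 ^ (a i).1 / (((a i).1 ! : ℝ) * ((i.1 ! : ℝ)) ^ (a i).1)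

/-!
Write `f i = m i * x ^ i / i!` and `S = f 1 + ⋯ + f n`, `G = f 1 + f 2 + f 3`. An assembly with
component counts `a` contributes `n! / (x ^ n * k!)` times the multinomial term
`k! / ∏ a i! * ∏ f i ^ a i` of `S ^ k`, so the assemblies with a component of size at least 4
contribute at most `n! / (x ^ n * k!)` times `S ^ k - G ^ k ≤ k (S - G) S ^ (k - 1)`.
The bound on `ρ` gives `S - G ≤ 2 (x ρ) ^ 4` and `S ^ k ≤ e ^ (1/2) (f 1 + f 2) ^ k`. Conversely,
`p(n, k)` is at least the contribution of the assembly with `n - 2r` singletons and `r` pairs; the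
choice of `x` makes it the central term of `(f 1 + f 2) ^ k`, which Stirling's formula bounds
below by `e ^ (1/2) (f 1 + f 2) ^ k / (2 e √r)`, and `2 e √r = 2 c₀ √(2 π r)`.
-/

open Real

lemma factorial_le_exp_one_mul_stirling {n : ℕ} (hn : n ≠ 0) :
    (n ! : ℝ) ≤ exp 1 * √n * (n / exp 1) ^ n := by
  obtain ⟨j, rfl⟩ := Nat.exists_eq_add_one_of_ne_zero hn
  have h : Stirling.stirlingSeq (j + 1) ≤ exp 1 / √2 := by
    simpa [Stirling.stirlingSeq_one] using Stirling.stirlingSeq'_antitone (Nat.zero_le j)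
  rw [Stirling.stirlingSeq, div_le_div_iff₀ (by positivity) (by positivity),
    sqrt_mul zero_le_two] at h
  refine le_of_mul_le_mul_right ?_ (by positivity : (0 : ℝ) < √2)
  linarith

lemma exp_three_halves_le : exp (3 / 2) ≤ 2 * √(2 * π) := by
  have h3 : exp 3 ≤ 8 * π := by
    have he : exp 1 ^ 3 < 2.7182818286 ^ 3 := by gcongr; exact exp_one_lt_d9
    have := pi_gt_d6
    rw [← exp_nat_mul] at he; norm_num at he; linarith
  calc exp (3 / 2) = √(exp 3) := exp_half 3
    _ ≤ √(8 * π) := sqrt_le_sqrt h3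
    _ = 2 * √(2 * π) := by
        rw [show (8 : ℝ) * π = 2 ^ 2 * (2 * π) by ring, sqrt_mul (by norm_num),
          sqrt_sq (by norm_num)]

lemma sqrt_two_pi_mul_pow_le_choose {r q : ℕ} (hr : r ≠ 0) (hq : q ≠ 0) :
    √(2 * π) * ((r + q : ℕ) : ℝ) ^ (r + q) ≤
      exp 2 * √r * (r + q).choose r * (r : ℝ) ^ r * (q : ℝ) ^ q := by
  set K := r + q with hK
  have hfac : ((K.choose r : ℕ) : ℝ) * r ! * q ! = K ! := by
    have := Nat.choose_mul_factorial_mul_factorial (Nat.le_add_right r q)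
    rw [Nat.add_sub_cancel_left] at this
    exact_mod_cast this
  have hqK : √q ≤ √K := sqrt_le_sqrt (by simp [hK])
  have he : exp 2 = exp 1 ^ 2 := by rw [← exp_nat_mul]; norm_num
  refine le_of_mul_le_mul_right ?_ (by positivity : (0 : ℝ) < √q)
  calc √(2 * π) * (K : ℝ) ^ K * √q
      ≤ √(2 * π) * (K : ℝ) ^ K * √K := by gcongr
    _ = √(2 * π * K) * (K / exp 1) ^ K * exp 1 ^ K := by
        rw [sqrt_mul' _ (Nat.cast_nonneg K), div_pow]
        field_simp
    _ ≤ K ! * exp 1 ^ K := by gcongr; exact Stirling.le_factorial_stirling K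
    _ = (K.choose r : ℝ) * r ! * q ! * exp 1 ^ K := by rw [hfac]
    _ ≤ (K.choose r : ℝ) * (exp 1 * √r * (r / exp 1) ^ r) * (exp 1 * √q * (q / exp 1) ^ q)
          * exp 1 ^ K := by
        gcongr
        · exact factorial_le_exp_one_mul_stirling hr
        · exact factorial_le_exp_one_mul_stirling hq
    _ = exp 2 * √r * (K.choose r : ℝ) * (r : ℝ) ^ r * (q : ℝ) ^ q * √q := by
        rw [he, hK, pow_add, div_pow, div_pow]
        field_simp

lemma exp_half_mul_pow_le_choose {r q : ℕ} (hr : r ≠ 0) (hq : q ≠ 0) :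
    exp (1 / 2) * ((r + q : ℕ) : ℝ) ^ (r + q) ≤
      2 * exp 1 * √r * (r + q).choose r * (r : ℝ) ^ r * (q : ℝ) ^ q := by
  have h := sqrt_two_pi_mul_pow_le_choose hr hq
  have hexp : exp (1 / 2) * exp 2 = exp 1 * exp (3 / 2) := by
    rw [← exp_add, ← exp_add]; norm_num
  have hpos : 0 < √(2 * π) := by positivity
  refine le_of_mul_le_mul_left ?_ hpos
  calc √(2 * π) * (exp (1 / 2) * ((r + q : ℕ) : ℝ) ^ (r + q))
      = exp (1 / 2) * (√(2 * π) * ((r + q : ℕ) : ℝ) ^ (r + q)) := by ring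
    _ ≤ exp (1 / 2) * (exp 2 * √r * (r + q).choose r * (r : ℝ) ^ r * (q : ℝ) ^ q) := by gcongr
    _ = exp 1 * exp (3 / 2) * (√r * (r + q).choose r * (r : ℝ) ^ r * (q : ℝ) ^ q) := by
        rw [← hexp]; ring
    _ ≤ exp 1 * (2 * √(2 * π)) * (√r * (r + q).choose r * (r : ℝ) ^ r * (q : ℝ) ^ q) := by
        gcongr; exact exp_three_halves_le
    _ = _ := by ring

lemma exp_half_mul_add_pow_le_choose {r q : ℕ} (hr : r ≠ 0) (hq : q ≠ 0) {u v : ℝ}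
    (hv : 0 ≤ v) (huv : v * q = u * r) :
    exp (1 / 2) * (u + v) ^ (r + q) ≤ 2 * exp 1 * √r * (r + q).choose r * u ^ q * v ^ r := by
  have hr' : (0 : ℝ) < r := by positivity
  set w := v / r
  have hw : 0 ≤ w := by positivity
  have hv' : v = w * r := (div_mul_cancel₀ v hr'.ne').symm
  have hu' : u = w * q := by rw [hv'] at huv; field_simp at huv ⊢; linarith
  have h := exp_half_mul_pow_le_choose hr hq
  calc exp (1 / 2) * (u + v) ^ (r + q)
      = w ^ (r + q) * (exp (1 / 2) * ((r + q : ℕ) : ℝ) ^ (r + q)) := by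
        rw [hu', hv', ← mul_add, mul_pow]; push_cast; ring
    _ ≤ w ^ (r + q) * (2 * exp 1 * √r * (r + q).choose r * (r : ℝ) ^ r * (q : ℝ) ^ q) := by gcongr
    _ = _ := by rw [hu', hv']; ring

lemma add_pow_le_exp_mul_pow {B E : ℝ} (hB : 0 < B) (hBE : 0 ≤ B + E) (k : ℕ) :
    (B + E) ^ k ≤ exp (k * (E / B)) * B ^ k := by
  have h : B + E ≤ exp (E / B) * B := by
    have := add_one_le_exp (E / B)
    calc B + E = (E / B + 1) * B := by field_simp; ring
      _ ≤ exp (E / B) * B := by gcongr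
  calc (B + E) ^ k ≤ (exp (E / B) * B) ^ k := by gcongr
    _ = exp (k * (E / B)) * B ^ k := by rw [mul_pow, exp_nat_mul]

lemma sum_Ico_pow_le_two_mul {t : ℝ} (ht0 : 0 ≤ t) (ht : t ≤ 1 / 2) (a b : ℕ) :
    ∑ i ∈ Ico a b, t ^ i ≤ 2 * t ^ a := by
  refine (geom_sum_Ico_le_of_lt_one ht0 (by linarith)).trans ?_
  rw [div_le_iff₀ (by linarith)]
  nlinarith [pow_nonneg ht0 a]

lemma pow_sub_pow_le_of_le {R : Type*} [CommRing R] [LinearOrder R] [IsOrderedRing R] {a b : R}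
    (hb : 0 ≤ b) (hba : b ≤ a) (k : ℕ) : a ^ k - b ^ k ≤ k * (a - b) * a ^ (k - 1) := by
  have h := abs_pow_sub_pow_le a b k
  rw [abs_of_nonneg (sub_nonneg.mpr hba), abs_of_nonneg hb, abs_of_nonneg (hb.trans hba),
    max_eq_left hba, mul_comm _ (k : R)] at h
  exact (le_abs_self _).trans h

lemma mul_pow_sub_one_le_pow {R : Type*} [CommSemiring R] [PartialOrder R] [IsOrderedRing R]
    {a b : R} (ha : 0 ≤ a) (hab : a ≤ b) {k : ℕ} (hk : k ≠ 0) : a * b ^ (k - 1) ≤ b ^ k :=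
  calc a * b ^ (k - 1) ≤ b * b ^ (k - 1) :=
        mul_le_mul_of_nonneg_right hab (pow_nonneg (ha.trans hab) _)
    _ = b ^ k := by rw [mul_comm, pow_sub_one_mul hk]

lemma prod_pow_div_factorial_eq {ι K : Type*} [Field K] [CharZero K] (s : Finset ι)
    (d : ι → ℕ) (u : ι → K) :
    ∏ i ∈ s, u i ^ d i / (d i)! =
      Nat.multinomial s d * (∏ i ∈ s, u i ^ d i) / (∑ i ∈ s, d i)! := by
  have hfac : ∀ j : ℕ, (j ! : K) ≠ 0 := fun j => Nat.cast_ne_zero.mpr j.factorial_ne_zero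
  rw [eq_div_iff (hfac _), ← Nat.multinomial_spec s d, prod_div_distrib]
  push_cast
  have : ∏ i ∈ s, ((d i)! : K) ≠ 0 := prod_ne_zero_iff.mpr fun i _ => hfac _
  field_simp

lemma sum_multinomial_mul_prod_le_pow_sub_pow {ι R : Type*} [DecidableEq ι] [CommRing R]
    [LinearOrder R] [IsStrictOrderedRing R] (s : Finset ι) {g h : ι → R}
    (hh : ∀ i ∈ s, 0 ≤ h i) (hhg : ∀ i ∈ s, h i ≤ g i) {k : ℕ} {A : Finset (ι → ℕ)}
    (hA : A ⊆ piAntidiag s k) (hvanish : ∀ e ∈ A, ∏ i ∈ s, h i ^ e i = 0) :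
    ∑ e ∈ A, Nat.multinomial s e * ∏ i ∈ s, g i ^ e i ≤
      (∑ i ∈ s, g i) ^ k - (∑ i ∈ s, h i) ^ k := by
  rw [sum_pow_eq_sum_piAntidiag, sum_pow_eq_sum_piAntidiag, ← sum_sub_distrib]
  calc ∑ e ∈ A, Nat.multinomial s e * ∏ i ∈ s, g i ^ e i
      = ∑ e ∈ A, (Nat.multinomial s e * ∏ i ∈ s, g i ^ e i -
          Nat.multinomial s e * ∏ i ∈ s, h i ^ e i) :=
        sum_congr rfl fun e he => by rw [hvanish e he, mul_zero, sub_zero]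
    _ ≤ _ := by
      refine sum_le_sum_of_subset_of_nonneg hA fun e _ _ => ?_
      rw [sub_nonneg]
      exact mul_le_mul_of_nonneg_left (prod_le_prod (fun i hi => pow_nonneg (hh i hi) _)
        fun i hi => pow_le_pow_left₀ (hh i hi) (hhg i hi) _) (Nat.cast_nonneg _)

noncomputable def tiltedWeight (m : ℕ → ℝ) (x : ℝ) (i : ℕ) : ℝ := m i * x ^ i / i !

@[simp] lemma tiltedWeight_one (m : ℕ → ℝ) (x : ℝ) : tiltedWeight m x 1 = m 1 * x := by
  simp [tiltedWeight]

@[simp] lemma tiltedWeight_two (m : ℕ → ℝ) (x : ℝ) : tiltedWeight m x 2 = m 2 * x ^ 2 / 2 := by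
  simp [tiltedWeight, Nat.factorial]

lemma tiltedWeight_nonneg {m : ℕ → ℝ} (hm : ∀ i, 0 ≤ m i) {x : ℝ} (hx : 0 ≤ x) (i : ℕ) :
    0 ≤ tiltedWeight m x i := by
  unfold tiltedWeight; have := hm i; positivity

noncomputable def assemblyWeight (m : ℕ → ℝ) (n : ℕ) (a : Fin (n + 1) → Fin (n + 1)) : ℝ :=
  (n ! : ℝ) * ∏ i : Fin (n + 1), m i.1 ^ (a i).1 / (((a i).1 ! : ℝ) * ((i.1 ! : ℝ)) ^ (a i).1)

lemma assemblyWeight_eq (m : ℕ → ℝ) {n k : ℕ} {x : ℝ} (hx : x ≠ 0)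
    {a : Fin (n + 1) → Fin (n + 1)} (hsize : ∑ i, i.1 * (a i).1 = n) (hcomp : ∑ i, (a i).1 = k) :
    assemblyWeight m n a = n ! / (x ^ n * k !) * (Nat.multinomial univ (fun i => (a i).1) *
      ∏ i : Fin (n + 1), tiltedWeight m x i ^ (a i).1) := by
  have hprod : ∏ i : Fin (n + 1), tiltedWeight m x i ^ (a i).1 / ((a i).1 ! : ℝ) =
      x ^ n * ∏ i : Fin (n + 1), m i.1 ^ (a i).1 / (((a i).1 ! : ℝ) * ((i.1 ! : ℝ)) ^ (a i).1) := by
    have hxn : x ^ n = ∏ i : Fin (n + 1), x ^ (i.1 * (a i).1) := by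
      rw [prod_pow_eq_pow_sum, hsize]
    rw [hxn, ← prod_mul_distrib]
    refine prod_congr rfl fun i _ => ?_
    rw [tiltedWeight, div_pow, mul_pow, ← pow_mul]
    field_simp
  rw [prod_pow_div_factorial_eq, hcomp] at hprod
  have hk : (k ! : ℝ) ≠ 0 := by positivity
  rw [assemblyWeight, ← mul_div_cancel_left₀ (∏ i : Fin (n + 1), _) (pow_ne_zero n hx), ← hprod]
  field_simp

lemma sum_fin_indicator_Ico {M : Type*} [AddCommMonoid M] (f : ℕ → M) {a b n : ℕ}
    (hb : b ≤ n + 1) :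
    ∑ i : Fin (n + 1), (Ico a b : Set ℕ).indicator f i = ∑ i ∈ Ico a b, f i := by
  rw [Fin.sum_univ_eq_sum_range (fun j => (Ico a b : Set ℕ).indicator f j),
    sum_indicator_subset _ fun j hj => by simp at hj ⊢; omega]

lemma sum_assemblyWeight_le_pow_sub_pow {m : ℕ → ℝ} (hm : ∀ i, 0 ≤ m i) {n k : ℕ} (hn : 3 ≤ n)
    {x : ℝ} (hx : 0 < x) {A : Finset (Fin (n + 1) → Fin (n + 1))}
    (hA : ∀ a ∈ A, (∑ i, i.1 * (a i).1) = n ∧ (∑ i, (a i).1) = k ∧ (a 0).1 = 0 ∧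
      ∃ i : Fin (n + 1), 4 ≤ i.1 ∧ (a i).1 ≠ 0) :
    ∑ a ∈ A, assemblyWeight m n a ≤ n ! / (x ^ n * k !) *
      ((∑ i ∈ Ico 1 (n + 1), tiltedWeight m x i) ^ k -
        (∑ i ∈ Ico 1 4, tiltedWeight m x i) ^ k) := by
  classical
  set f := tiltedWeight m x
  have hf : ∀ i, 0 ≤ f i := tiltedWeight_nonneg hm hx.le
  set fS : Fin (n + 1) → ℝ := fun i => (Ico 1 (n + 1) : Set ℕ).indicator f i
  set fG : Fin (n + 1) → ℝ := fun i => (Ico 1 4 : Set ℕ).indicator f i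
  have hinj : Set.InjOn (fun a : Fin (n + 1) → Fin (n + 1) => fun i => (a i).1) A :=
    fun a _ b _ hab => funext fun i => Fin.ext (congrFun hab i)
  rw [← sum_fin_indicator_Ico f le_rfl, ← sum_fin_indicator_Ico f (by omega : 4 ≤ n + 1)]
  calc (∑ a ∈ A, assemblyWeight m n a)
      = n ! / (x ^ n * k !) * ∑ e ∈ A.image (fun a (i : Fin (n + 1)) => (a i).1),
          Nat.multinomial univ e * ∏ i, fS i ^ e i := by
        rw [sum_image hinj, mul_sum]
        refine sum_congr rfl fun a ha => ?_
        obtain ⟨hsize, hcomp, h0, -⟩ := hA a ha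
        rw [assemblyWeight_eq m hx.ne' hsize hcomp]
        congr 2
        refine prod_congr rfl fun i _ => ?_
        rcases Nat.eq_zero_or_pos i.1 with hi | hi
        · simp only [show (a i).1 = 0 by rw [show i = 0 from Fin.ext hi, h0], pow_zero]
        · have hi' : i.1 ∈ (Ico 1 (n + 1) : Set ℕ) := by simp; omega
          simp only [fS, f, Set.indicator_of_mem hi']
    _ ≤ _ := by
      gcongr
      refine sum_multinomial_mul_prod_le_pow_sub_pow univ (g := fS) (h := fG)
        (fun i _ => Set.indicator_nonneg (fun j _ => hf j) i)
        (fun i _ => Set.indicator_le_indicator_of_subset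
          (coe_subset.mpr (Ico_subset_Ico_right (by omega))) hf i.1) ?_ fun e he => ?_
      · intro e he
        obtain ⟨a, ha, rfl⟩ := mem_image.mp he
        exact mem_piAntidiag.mpr ⟨(hA a ha).2.1, fun i _ => mem_univ i⟩
      · obtain ⟨a, ha, rfl⟩ := mem_image.mp he
        obtain ⟨i, hi4, hi⟩ := (hA a ha).2.2.2
        refine prod_eq_zero (mem_univ i) ?_
        simp only [fG, Set.indicator_of_notMem (by simp; omega : i.1 ∉ (Ico 1 4 : Set ℕ)),
          zero_pow hi]

lemma assemblyWeight_nonneg {m : ℕ → ℝ} (hm : ∀ i, 0 ≤ m i) {n : ℕ}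
    (a : Fin (n + 1) → Fin (n + 1)) : 0 ≤ assemblyWeight m n a :=
  mul_nonneg (Nat.cast_nonneg _) (prod_nonneg fun i _ => div_nonneg (pow_nonneg (hm _) _)
    (by positivity))

lemma choose_mul_le_assemblyCount {m : ℕ → ℝ} (hm : ∀ i, 0 ≤ m i) {n k q r : ℕ}
    (hn : q + 2 * r = n) (hk : q + r = k) (hr : r ≠ 0) {x : ℝ} (hx : x ≠ 0) :
    n ! / (x ^ n * k !) * (k.choose r * tiltedWeight m x 1 ^ q * tiltedWeight m x 2 ^ r) ≤
      assemblyCount m n k := by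
  classical
  set i₁ : Fin (n + 1) := ⟨1, by omega⟩
  set i₂ : Fin (n + 1) := ⟨2, by omega⟩
  have h12 : i₁ ≠ i₂ := by simp [i₁, i₂, Fin.ext_iff]
  let a : Fin (n + 1) → Fin (n + 1) := fun i =>
    if i = i₁ then ⟨q, by omega⟩ else if i = i₂ then ⟨r, by omega⟩ else 0
  have ha₁ : (a i₁).1 = q := by simp [a]
  have ha₂ : (a i₂).1 = r := by simp [a, h12.symm]
  have ha : ∀ i, i ≠ i₁ ∧ i ≠ i₂ → (a i).1 = 0 := fun i hi => by simp [a, hi.1, hi.2]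
  have hsize : ∑ i, i.1 * (a i).1 = n := by
    rw [Fintype.sum_eq_add i₁ i₂ h12 fun i hi => by rw [ha i hi, mul_zero], ha₁, ha₂]
    simp [i₁, i₂]; omega
  have hcomp : ∑ i, (a i).1 = k := by rw [Fintype.sum_eq_add i₁ i₂ h12 ha, ha₁, ha₂, hk]
  have hmult : Nat.multinomial univ (fun i => (a i).1) = k.choose r := by
    rw [← Nat.multinomial_congr_of_sdiff (subset_univ {i₁, i₂})
      (fun i hi => ha i (by simpa using hi)) fun _ _ => rfl, Nat.binomial_eq_choose h12, ha₁, ha₂,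
      ← hk, Nat.choose_symm_add]
  have hprod : ∏ i : Fin (n + 1), tiltedWeight m x i ^ (a i).1 =
      tiltedWeight m x 1 ^ q * tiltedWeight m x 2 ^ r := by
    rw [Fintype.prod_eq_mul i₁ i₂ h12 fun i hi => by rw [ha i hi, pow_zero], ha₁, ha₂]
  have h0 : (a 0).1 = 0 := ha 0 (by simp [i₁, i₂, Fin.ext_iff])
  calc _ = assemblyWeight m n a := by
        rw [assemblyWeight_eq m hx hsize hcomp, hmult, hprod, mul_assoc]
    _ ≤ assemblyCount m n k := single_le_sum (f := assemblyWeight m n)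
        (fun b _ => assemblyWeight_nonneg hm b) (mem_filter.mpr ⟨mem_univ _, hsize, hcomp, h0⟩)

lemma tiltedWeight_le_pow {m : ℕ → ℝ} {x ρ : ℝ} (hx : 0 ≤ x) {i : ℕ}
    (hρ : m i / i ! ≤ ρ ^ i) : tiltedWeight m x i ≤ (x * ρ) ^ i :=
  calc tiltedWeight m x i = m i / i ! * x ^ i := by rw [tiltedWeight]; ring
    _ ≤ ρ ^ i * x ^ i := by gcongr
    _ = (x * ρ) ^ i := by rw [mul_pow, mul_comm]

lemma sum_Ico_tiltedWeight_le {m : ℕ → ℝ} {x ρ : ℝ} (hx : 0 ≤ x) (hρ0 : 0 ≤ ρ) {a : ℕ}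
    (hρ : ∀ i, a ≤ i → m i / i ! ≤ ρ ^ i) (hxρ : x * ρ ≤ 1 / 2) (b : ℕ) :
    ∑ i ∈ Ico a b, tiltedWeight m x i ≤ 2 * (x * ρ) ^ a :=
  (sum_le_sum fun i hi => tiltedWeight_le_pow hx (hρ i (mem_Ico.mp hi).1)).trans
    (sum_Ico_pow_le_two_mul (by positivity) hxρ a b)

lemma sum_Ico_tiltedWeight_pow_le {m : ℕ → ℝ} (hm : ∀ i, 0 ≤ m i) (h1 : 0 < m 1) {x ρ : ℝ}
    (hx : 0 < x) (hρ0 : 0 ≤ ρ) (hρ : ∀ i, 3 ≤ i → m i / i ! ≤ ρ ^ i) (hxρ : x * ρ ≤ 1 / 2)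
    {n k : ℕ} (hn : 2 ≤ n) (hsmall : 2 * (k : ℝ) * ρ ^ 3 * x ^ 2 / m 1 ≤ 1 / 2) :
    (∑ i ∈ Ico 1 (n + 1), tiltedWeight m x i) ^ k ≤
      exp (1 / 2) * (tiltedWeight m x 1 + tiltedWeight m x 2) ^ k := by
  set f := tiltedWeight m x
  set B := f 1 + f 2
  set E := ∑ i ∈ Ico 3 (n + 1), f i
  have hf := tiltedWeight_nonneg hm hx.le
  have hsplit : ∑ i ∈ Ico 1 (n + 1), f i = B + E := by
    rw [← sum_Ico_consecutive f (by norm_num : 1 ≤ 3) (by omega : 3 ≤ n + 1)]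
    congr 1
    simp [B, sum_Ico_succ_top]
  have hB : m 1 * x ≤ B := tiltedWeight_one m x ▸ le_add_of_nonneg_right (hf 2)
  have hE : E ≤ 2 * (x * ρ) ^ 3 := sum_Ico_tiltedWeight_le hx.le hρ0 hρ hxρ _
  have hkE : k * (E / B) ≤ 1 / 2 :=
    calc k * (E / B) ≤ k * (2 * (x * ρ) ^ 3 / (m 1 * x)) := by
          gcongr
      _ = 2 * (k : ℝ) * ρ ^ 3 * x ^ 2 / m 1 := by field_simp
      _ ≤ 1 / 2 := hsmall
  have hBpos : 0 < B := (mul_pos h1 hx).trans_le hB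
  calc (∑ i ∈ Ico 1 (n + 1), f i) ^ k = (B + E) ^ k := by rw [hsplit]
    _ ≤ exp (k * (E / B)) * B ^ k :=
        add_pow_le_exp_mul_pow hBpos (add_nonneg hBpos.le (sum_nonneg fun i _ => hf i)) k
    _ ≤ exp (1 / 2) * B ^ k := by gcongr

lemma assemblyCountL1ge4_le_mul_pow {m : ℕ → ℝ} (hm : ∀ i, 0 ≤ m i) {n k : ℕ} (hn : 3 ≤ n)
    {x ρ : ℝ} (hx : 0 < x) (hρ0 : 0 ≤ ρ) (hρ : ∀ i, 4 ≤ i → m i / i ! ≤ ρ ^ i)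
    (hxρ : x * ρ ≤ 1 / 2) :
    assemblyCountL1ge4 m n k ≤ n ! / (x ^ n * k !) *
      (k * (2 * (x * ρ) ^ 4) * (∑ i ∈ Ico 1 (n + 1), tiltedWeight m x i) ^ (k - 1)) := by
  set f := tiltedWeight m x
  set S := ∑ i ∈ Ico 1 (n + 1), f i
  set G := ∑ i ∈ Ico 1 4, f i
  have hf := tiltedWeight_nonneg hm hx.le
  have hSG : S - G = ∑ i ∈ Ico 4 (n + 1), f i :=
    sub_eq_iff_eq_add'.mpr (sum_Ico_consecutive f (by norm_num) (by omega)).symm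
  have hG : 0 ≤ G := sum_nonneg fun i _ => hf i
  have hGS : G ≤ S := sub_nonneg.mp (hSG ▸ sum_nonneg fun i _ => hf i)
  calc assemblyCountL1ge4 m n k ≤ n ! / (x ^ n * k !) * (S ^ k - G ^ k) :=
        sum_assemblyWeight_le_pow_sub_pow hm hn hx fun a ha => (mem_filter.mp ha).2
    _ ≤ n ! / (x ^ n * k !) * (k * (S - G) * S ^ (k - 1)) := by
        gcongr; exact pow_sub_pow_le_of_le hG hGS k
    _ ≤ _ := by
        have := hG.trans hGS
        gcongr
        exact hSG ▸ sum_Ico_tiltedWeight_le hx.le hρ0 hρ hxρ _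

/-- under m1, m2 > 0, ρ ≥ (m_i/i!)^{1/i} for i ≥ 3, 0 < r < n/2,
k = n - r, x = 2m1 r/(m2(n-2r)), xρ ≤ 1/2 and 2kρ³x²/m1 ≤ 1/2, picking an
M-assembly uniformly among the p(n,k) assemblies of size n with k components:
P(L₁ ≥ 4) ≤ (2kρ⁴x³/m1)·2c₀√(2πr), c₀ = e/√(2π); equivalently (multiplying
through by p(n,k)): #(assemblies with L₁ ≥ 4) ≤ u₄(n,r)·p(n,k). -/
theorem stmt_17 (m : ℕ → ℝ) (hm : ∀ i, 0 ≤ m i) (h1 : 0 < m 1) (h2 : 0 < m 2)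
    (ρ : ℝ) (hρ0 : 0 ≤ ρ) (hρ : ∀ i, 3 ≤ i → m i / (i ! : ℝ) ≤ ρ ^ i)
    (n r k : ℕ) (hr : 0 < r) (hrn : 2 * r < n) (hk : k = n - r)
    (x : ℝ) (hx : x = 2 * m 1 * (r : ℝ) / (m 2 * ((n : ℝ) - 2 * r)))
    (hxρ : x * ρ ≤ 1 / 2)
    (hsmall : 2 * (k : ℝ) * ρ ^ 3 * x ^ 2 / m 1 ≤ 1 / 2) :
    assemblyCountL1ge4 m n k ≤
      (2 * (k : ℝ) * ρ ^ 4 * x ^ 3 / m 1) *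
        (2 * (Real.exp 1 / Real.sqrt (2 * Real.pi)) * Real.sqrt (2 * Real.pi * r)) *
        assemblyCount m n k := by
  set q := n - 2 * r
  have hqR : (q : ℝ) = n - 2 * r := by rw [Nat.cast_sub hrn.le]; push_cast; ring
  have hx0 : 0 < x := by
    rw [hx, ← hqR]
    have : 0 < q := by omega
    positivity
  set f := tiltedWeight m x
  set S := ∑ i ∈ Ico 1 (n + 1), f i
  have hf := tiltedWeight_nonneg hm hx0.le
  have hS : f 1 * S ^ (k - 1) ≤ S ^ k := mul_pow_sub_one_le_pow (hf 1)
    (single_le_sum (fun i _ => hf i) (mem_Ico.mpr ⟨le_rfl, by omega⟩)) (by omega)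
  -- `x` is chosen so that `f 1 : f 2 = q : r`: the mode of the expansion of `(f 1 + f 2) ^ k`
  have hmode : f 2 * q = f 1 * r := by
    simp only [f, tiltedWeight_one, tiltedWeight_two, hqR, hx]; field_simp
  have hbinom := exp_half_mul_add_pow_le_choose hr.ne' (by omega : q ≠ 0) (hf 2) hmode
  rw [show r + q = k by omega] at hbinom
  calc assemblyCountL1ge4 m n k
      ≤ n ! / (x ^ n * k !) * (k * (2 * (x * ρ) ^ 4) * S ^ (k - 1)) :=
        assemblyCountL1ge4_le_mul_pow hm (by omega) hx0 hρ0 (fun i hi => hρ i (by omega)) hxρ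
    _ = 2 * k * ρ ^ 4 * x ^ 3 / m 1 * (n ! / (x ^ n * k !)) * (f 1 * S ^ (k - 1)) := by
        simp only [f, tiltedWeight_one]; field_simp
    _ ≤ 2 * k * ρ ^ 4 * x ^ 3 / m 1 * (n ! / (x ^ n * k !)) *
          (2 * exp 1 * √r * (k.choose r * f 1 ^ q * f 2 ^ r)) := by
        refine mul_le_mul_of_nonneg_left (hS.trans ?_) (by positivity)
        refine (sum_Ico_tiltedWeight_pow_le hm h1 hx0 hρ0 hρ hxρ (by omega) hsmall).trans ?_
        exact hbinom.trans_eq (by ring)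
    _ = 2 * k * ρ ^ 4 * x ^ 3 / m 1 * (2 * (exp 1 / √(2 * π)) * √(2 * π * r)) *
          (n ! / (x ^ n * k !) * (k.choose r * f 1 ^ q * f 2 ^ r)) := by
        rw [sqrt_mul' _ (Nat.cast_nonneg r)]; field_simp
    _ ≤ _ := by
        gcongr
        exact choose_mul_le_assemblyCount hm (by omega) (by omega) hr.ne' hx0.ne'
end
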